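/- arXiv:2405.19151 — 4 statements merged into one kernel-verified Lean document; each statement's English description precedes it below -/
import Mathlib

section
/- Let x ≥ 1 and y ≥ 2, and let F_y be the σ-algebra generated by {α(p) : p prime, p ≤ y}. Then almost surely E[|S_x|² | F_y] = |S_{x,y}|² + ∑_{y < m ≤ x, m y-rough} m^{-1} |S_{x/m, y}|². -/
open MeasureTheory ProbabilityTheory
open scoped Classical

noncomputable section

/-- The uniform probability measure on the unit circle `S¹ ⊆ ℂ`. -/
def circleUniform : Measure ℂ :=
  Measure.map (fun θ : ℝ => Complex.exp (2 * Real.pi * θ * Complex.I))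
    (volume.restrict (Set.Ioc (0:ℝ) 1))

variable {Ω : Type*} [MeasurableSpace Ω]

/-- `f` is a Steinhaus random multiplicative function on `(Ω, μ)`:  a random completely
multiplicative function with values in the unit circle whose values at the primes are
i.i.d. uniform on the circle. -/
structure IsSteinhausRMF (μ : Measure Ω) (f : ℕ → Ω → ℂ) : Prop where
  meas : ∀ n, Measurable (f n)
  map_one : ∀ ω, f 1 ω = 1
  mult : ∀ ω, ∀ m n : ℕ, 1 ≤ m → 1 ≤ n → f (m * n) ω = f m ω * f n ω
  unimodular : ∀ ω, ∀ n : ℕ, 1 ≤ n → ‖f n ω‖ = 1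
  indep : iIndepFun (fun p : Nat.Primes => f (p : ℕ)) μ
  unif : ∀ p : Nat.Primes, Measure.map (f (p : ℕ)) μ = circleUniform

/-- `S_x := x^{-1/2} ∑_{n ≤ x} α(n)`. -/
def S (f : ℕ → Ω → ℂ) (x : ℝ) (ω : Ω) : ℂ :=
  ((Real.sqrt x)⁻¹ : ℝ) * ∑ n ∈ Finset.Icc 1 ⌊x⌋₊, f n ω

/-- A positive integer is `y`-smooth if every prime dividing it is at most `y`. -/
def IsSmoothNum (y : ℝ) (n : ℕ) : Prop := ∀ p : ℕ, p.Prime → p ∣ n → (p : ℝ) ≤ y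

/-- A positive integer is `y`-rough if every prime dividing it exceeds `y`. -/
def IsRoughNum (y : ℝ) (n : ℕ) : Prop := ∀ p : ℕ, p.Prime → p ∣ n → y < (p : ℝ)

/-- `S_{x,y} := x^{-1/2} ∑_{n ≤ x, n y-smooth} α(n)` (equal to `0` for `x < 1`). -/
def Ssm (f : ℕ → Ω → ℂ) (y x : ℝ) (ω : Ω) : ℂ :=
  ((Real.sqrt x)⁻¹ : ℝ) * ∑ n ∈ (Finset.Icc 1 ⌊x⌋₊).filter (fun n => IsSmoothNum y n), f n ω

/-- The random Euler product `A_y(s) := ∏_{p ≤ y} (1 - α(p) p^{-s})⁻¹`. -/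
def EulerA (f : ℕ → Ω → ℂ) (y : ℝ) (s : ℂ) (ω : Ω) : ℂ :=
  ∏ p ∈ (Finset.Icc 1 ⌊y⌋₊).filter Nat.Prime, (1 - f p ω * (p : ℂ) ^ (-s))⁻¹

/-- `Ψ(x,y)`: the number of `y`-smooth integers in `[1,x]`. -/
def Psi (x y : ℝ) : ℕ := ((Finset.Icc 1 ⌊x⌋₊).filter (fun n => IsSmoothNum y n)).card

/-- The σ-algebra generated by `{α(p) : p prime, p ≤ y}`. -/
def sigmaAlg (f : ℕ → Ω → ℂ) (y : ℝ) : MeasurableSpace Ω :=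
  ⨆ p ∈ {p : ℕ | p.Prime ∧ (p : ℝ) ≤ y}, MeasurableSpace.comap (f p) inferInstance

/-- `G_{y,2}(s;σ) := ∑_{p ≤ y} (α(p) p^{-(σ+is)})²`, real part. -/
def G2Re (f : ℕ → Ω → ℂ) (y σ s : ℝ) (ω : Ω) : ℝ :=
  (∑ p ∈ (Finset.Icc 1 ⌊y⌋₊).filter Nat.Prime,
    (f p ω * (p : ℂ) ^ (-((σ : ℂ) + s * Complex.I))) ^ 2).re

/-- `G_{y,1}^Re(t) := Re ∑_{p ≤ y} α(p) p^{-(1/2+it)}`. -/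
def G1Re (f : ℕ → Ω → ℂ) (y t : ℝ) (ω : Ω) : ℝ :=
  (∑ p ∈ (Finset.Icc 1 ⌊y⌋₊).filter Nat.Prime,
    f p ω * (p : ℂ) ^ (-((1/2 : ℂ) + t * Complex.I))).re

/-- The values of `α` at primes are i.i.d. uniform on the unit circle. -/
structure IsSteinhausFamily (μ : Measure Ω) (f : ℕ → Ω → ℂ) : Prop where
  meas : ∀ p : ℕ, p.Prime → Measurable (f p)
  unimodular : ∀ ω, ∀ p : ℕ, p.Prime → ‖f p ω‖ = 1
  indep : iIndepFun (fun p : Nat.Primes => f (p : ℕ)) μ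
  unif : ∀ p : Nat.Primes, Measure.map (f (p : ℕ)) μ = circleUniform

/-- A real-valued continuous mean-zero Gaussian field on `[0,1]`. -/
structure IsContGaussianField (μ : Measure Ω) (G : ℝ → Ω → ℝ) : Prop where
  meas : ∀ x ∈ Set.Icc (0:ℝ) 1, Measurable (G x)
  cont : ∀ᵐ ω ∂μ, ContinuousOn (fun x => G x ω) (Set.Icc (0:ℝ) 1)
  gaussian : ∀ (n : ℕ) (c : Fin n → ℝ) (x : Fin n → ℝ), (∀ i, x i ∈ Set.Icc (0:ℝ) 1) →
    ∃ v : NNReal, Measure.map (fun ω => ∑ i, c i * G (x i) ω) μ = gaussianReal 0 v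

end


section AuxA


/-- rough part of n -/
noncomputable def rpart (y : ℝ) (n : ℕ) : ℕ :=
  ∏ p ∈ n.primeFactors.filter (fun p : ℕ => y < (p : ℝ)), p ^ n.factorization p

/-- smooth part of n -/
noncomputable def spart (y : ℝ) (n : ℕ) : ℕ :=
  ∏ p ∈ n.primeFactors.filter (fun p : ℕ => ¬ y < (p : ℝ)), p ^ n.factorization p


lemma prod_primeFactors_pow_factorization {n : ℕ} (hn : n ≠ 0) :
    ∏ p ∈ n.primeFactors, p ^ n.factorization p = n := by
  have := Nat.factorization_prod_pow_eq_self hn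
  rwa [Finsupp.prod, Nat.support_factorization] at this

lemma rpart_mul_spart (y : ℝ) {n : ℕ} (hn : n ≠ 0) : rpart y n * spart y n = n := by
  rw [rpart, spart, Finset.prod_filter_mul_prod_filter_not]
  exact prod_primeFactors_pow_factorization hn

lemma rpart_ne_zero (y : ℝ) (n : ℕ) : rpart y n ≠ 0 :=
  Finset.prod_ne_zero_iff.2 fun p hp =>
    pow_ne_zero _ (Nat.prime_of_mem_primeFactors (Finset.mem_filter.1 hp).1).pos.ne'

lemma spart_ne_zero (y : ℝ) (n : ℕ) : spart y n ≠ 0 :=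
  Finset.prod_ne_zero_iff.2 fun p hp =>
    pow_ne_zero _ (Nat.prime_of_mem_primeFactors (Finset.mem_filter.1 hp).1).pos.ne'

lemma isRough_rpart (y : ℝ) (n : ℕ) : IsRoughNum y (rpart y n) := by
  intro q hq hdvd
  rw [rpart] at hdvd
  obtain ⟨p, hp, hqp⟩ := (hq.prime.dvd_finset_prod_iff _).1 hdvd
  have hpmem := Finset.mem_filter.1 hp
  have hpp : p.Prime := Nat.prime_of_mem_primeFactors hpmem.1
  have hqp' : q = p := (Nat.prime_dvd_prime_iff_eq hq hpp).1 (hq.dvd_of_dvd_pow hqp)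
  subst hqp'
  exact hpmem.2

lemma isSmooth_spart (y : ℝ) (n : ℕ) : IsSmoothNum y (spart y n) := by
  intro q hq hdvd
  rw [spart] at hdvd
  obtain ⟨p, hp, hqp⟩ := (hq.prime.dvd_finset_prod_iff _).1 hdvd
  have hpmem := Finset.mem_filter.1 hp
  have hpp : p.Prime := Nat.prime_of_mem_primeFactors hpmem.1
  have hqp' : q = p := (Nat.prime_dvd_prime_iff_eq hq hpp).1 (hq.dvd_of_dvd_pow hqp)
  subst hqp'
  exact not_lt.1 hpmem.2

lemma rpart_mul_eq {y : ℝ} {m a : ℕ} (hm : m ≠ 0) (ha : a ≠ 0)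
    (hrough : IsRoughNum y m) (hsmooth : IsSmoothNum y a) : rpart y (m * a) = m := by
  rw [rpart]
  have hfil : ((m * a).primeFactors.filter (fun p : ℕ => y < (p : ℝ))) = m.primeFactors := by
    rw [Nat.primeFactors_mul hm ha, Finset.filter_union,
      Finset.filter_true_of_mem (fun p hp => hrough p (Nat.prime_of_mem_primeFactors hp)
        (Nat.dvd_of_mem_primeFactors hp)),
      Finset.filter_false_of_mem (fun p hp => not_lt.2 (hsmooth p
        (Nat.prime_of_mem_primeFactors hp) (Nat.dvd_of_mem_primeFactors hp))),
      Finset.union_empty]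
  rw [hfil]
  have hcong : ∀ p ∈ m.primeFactors, p ^ (m * a).factorization p = p ^ m.factorization p := by
    intro p hp
    have hpp := Nat.prime_of_mem_primeFactors hp
    have hpa : ¬ p ∣ a := fun hdvd => absurd (hsmooth p hpp hdvd)
      (not_le.2 (hrough p hpp (Nat.dvd_of_mem_primeFactors hp)))
    rw [Nat.factorization_mul hm ha, Finsupp.add_apply,
      Nat.factorization_eq_zero_of_not_dvd hpa, add_zero]
  rw [Finset.prod_congr rfl hcong]
  exact prod_primeFactors_pow_factorization hm

lemma spart_mul_eq {y : ℝ} {m a : ℕ} (hm : m ≠ 0) (ha : a ≠ 0)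
    (hrough : IsRoughNum y m) (hsmooth : IsSmoothNum y a) : spart y (m * a) = a := by
  rw [spart]
  have hfil : ((m * a).primeFactors.filter (fun p : ℕ => ¬ y < (p : ℝ))) = a.primeFactors := by
    rw [Nat.primeFactors_mul hm ha, Finset.filter_union,
      Finset.filter_false_of_mem (fun p hp => not_not.2 (hrough p
        (Nat.prime_of_mem_primeFactors hp) (Nat.dvd_of_mem_primeFactors hp))),
      Finset.filter_true_of_mem (fun p hp => not_lt.2 (hsmooth p
        (Nat.prime_of_mem_primeFactors hp) (Nat.dvd_of_mem_primeFactors hp))),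
      Finset.empty_union]
  rw [hfil]
  have hcong : ∀ p ∈ a.primeFactors, p ^ (m * a).factorization p = p ^ a.factorization p := by
    intro p hp
    have hpp := Nat.prime_of_mem_primeFactors hp
    have hpm : ¬ p ∣ m := fun hdvd => absurd (hrough p hpp hdvd)
      (not_lt.2 (hsmooth p hpp (Nat.dvd_of_mem_primeFactors hp)))
    rw [Nat.factorization_mul hm ha, Finsupp.add_apply,
      Nat.factorization_eq_zero_of_not_dvd hpm, zero_add]
  rw [Finset.prod_congr rfl hcong]
  exact prod_primeFactors_pow_factorization ha

lemma sum_decomp_aux (g : ℕ → ℂ) (hg : ∀ m a : ℕ, 1 ≤ m → 1 ≤ a → g (m * a) = g m * g a)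
    (x y : ℝ) (hx : 1 ≤ x) :
    ∑ n ∈ Finset.Icc 1 ⌊x⌋₊, g n
      = ∑ m ∈ (Finset.Icc 1 ⌊x⌋₊).filter (fun m => IsRoughNum y m),
          g m * ∑ a ∈ (Finset.Icc 1 ⌊x / (m : ℝ)⌋₊).filter (fun n => IsSmoothNum y n), g a := by
  have hx0 : (0:ℝ) < x := lt_of_lt_of_le one_pos hx
  symm
  calc
    ∑ m ∈ (Finset.Icc 1 ⌊x⌋₊).filter (fun m => IsRoughNum y m),
        g m * ∑ a ∈ (Finset.Icc 1 ⌊x / (m : ℝ)⌋₊).filter (fun n => IsSmoothNum y n), g a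
      = ∑ m ∈ (Finset.Icc 1 ⌊x⌋₊).filter (fun m => IsRoughNum y m),
          ∑ a ∈ (Finset.Icc 1 ⌊x / (m : ℝ)⌋₊).filter (fun n => IsSmoothNum y n), g (m * a) := by
        refine Finset.sum_congr rfl fun m hm => ?_
        rw [Finset.mul_sum]
        refine Finset.sum_congr rfl fun a ha => ?_
        have hm1 : 1 ≤ m := (Finset.mem_Icc.1 (Finset.mem_filter.1 hm).1).1
        have ha1 : 1 ≤ a := (Finset.mem_Icc.1 (Finset.mem_filter.1 ha).1).1
        exact (hg m a hm1 ha1).symm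
    _ = ∑ q ∈ ((Finset.Icc 1 ⌊x⌋₊).filter (fun m => IsRoughNum y m)).sigma
          (fun m => (Finset.Icc 1 ⌊x / (m : ℝ)⌋₊).filter (fun n => IsSmoothNum y n)),
          g (q.1 * q.2) := Finset.sum_sigma' _ _ _
    _ = ∑ n ∈ Finset.Icc 1 ⌊x⌋₊, g n := by
        refine Finset.sum_nbij' (fun q => q.1 * q.2) (fun n => ⟨rpart y n, spart y n⟩)
          ?_ ?_ ?_ ?_ ?_
        · rintro ⟨m, a⟩ hq
          dsimp only at hq ⊢
          rw [Finset.mem_sigma] at hq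
          obtain ⟨hmR, haS⟩ := hq
          have hm := Finset.mem_filter.1 hmR
          have ha := Finset.mem_filter.1 haS
          have hm1 : 1 ≤ m := (Finset.mem_Icc.1 hm.1).1
          have ha1 : 1 ≤ a := (Finset.mem_Icc.1 ha.1).1
          have haf : a ≤ ⌊x / (m:ℝ)⌋₊ := (Finset.mem_Icc.1 ha.1).2
          have hm0 : (0:ℝ) < m := by exact_mod_cast hm1
          have hax : (a : ℝ) ≤ x / m :=
            le_trans (Nat.cast_le.2 haf) (Nat.floor_le (div_nonneg hx0.le hm0.le))
          have hma : ((m * a : ℕ) : ℝ) ≤ x := by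
            push_cast
            calc (m:ℝ) * a ≤ m * (x / m) := by
                  exact mul_le_mul_of_nonneg_left hax hm0.le
              _ = x := by field_simp
          rw [Finset.mem_Icc]
          exact ⟨Nat.one_le_iff_ne_zero.2 (Nat.mul_ne_zero (by omega) (by omega)),
            Nat.le_floor hma⟩

        · intro n hn
          rw [Finset.mem_Icc] at hn
          have hn0 : n ≠ 0 := by omega
          have hnx : (n : ℝ) ≤ x := le_trans (Nat.cast_le.2 hn.2) (Nat.floor_le hx0.le)
          have hrs := rpart_mul_spart y hn0
          have hr0 : rpart y n ≠ 0 := rpart_ne_zero y n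
          have hs0 : spart y n ≠ 0 := spart_ne_zero y n
          rw [Finset.mem_sigma]
          dsimp only
          constructor
          · rw [Finset.mem_filter, Finset.mem_Icc]
            refine ⟨⟨Nat.one_le_iff_ne_zero.2 hr0, ?_⟩, isRough_rpart y n⟩
            exact le_trans (Nat.le_of_dvd (by omega) ⟨spart y n, hrs.symm⟩) hn.2
          · rw [Finset.mem_filter, Finset.mem_Icc]
            refine ⟨⟨Nat.one_le_iff_ne_zero.2 hs0, ?_⟩, isSmooth_spart y n⟩
            refine Nat.le_floor ?_
            rw [le_div_iff₀ (by exact_mod_cast Nat.pos_of_ne_zero hr0)]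
            calc ((spart y n : ℝ)) * (rpart y n) = ((rpart y n * spart y n : ℕ) : ℝ) := by
                  push_cast; ring
              _ = (n : ℝ) := by rw [hrs]
              _ ≤ x := hnx
        · rintro ⟨m, a⟩ hq
          dsimp only at hq ⊢
          rw [Finset.mem_sigma] at hq
          obtain ⟨hmR, haS⟩ := hq
          have hm := Finset.mem_filter.1 hmR
          have ha := Finset.mem_filter.1 haS
          have hm0 : m ≠ 0 := Nat.one_le_iff_ne_zero.1 (Finset.mem_Icc.1 hm.1).1
          have ha0 : a ≠ 0 := Nat.one_le_iff_ne_zero.1 (Finset.mem_Icc.1 ha.1).1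
          have h1 : rpart y (m * a) = m := rpart_mul_eq hm0 ha0 hm.2 ha.2
          have h2 : spart y (m * a) = a := spart_mul_eq hm0 ha0 hm.2 ha.2
          simp [h1, h2]
        · intro n hn
          rw [Finset.mem_Icc] at hn
          dsimp only
          exact rpart_mul_spart y (by omega)
        · intro q hq
          rfl

end AuxA

section AuxB

open Complex MeasurableSpace

variable {Ω : Type*} [MeasurableSpace Ω] {μ : Measure Ω} {f : ℕ → Ω → ℂ}

lemma steinhaus_pow (hf : IsSteinhausRMF μ f) (ω : Ω) {p : ℕ} (hp : p ≠ 0) (k : ℕ) :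
    f (p ^ k) ω = f p ω ^ k := by
  induction k with
  | zero => simpa using hf.map_one ω
  | succ k ih =>
      rw [pow_succ, hf.mult ω _ p (Nat.one_le_iff_ne_zero.2 (pow_ne_zero _ hp))
        (Nat.one_le_iff_ne_zero.2 hp), ih, pow_succ]

lemma steinhaus_prod (hf : IsSteinhausRMF μ f) (ω : Ω) {ι : Type*} (s : Finset ι) (g : ι → ℕ)
    (hg : ∀ i ∈ s, g i ≠ 0) :
    f (∏ i ∈ s, g i) ω = ∏ i ∈ s, f (g i) ω := by
  classical
  induction s using Finset.induction_on with
  | empty => simpa using hf.map_one ω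
  | @insert a s ha ih =>
      rw [Finset.prod_insert ha, Finset.prod_insert ha,
        hf.mult ω _ _ (Nat.one_le_iff_ne_zero.2 (hg a (Finset.mem_insert_self a s)))
          (Nat.one_le_iff_ne_zero.2 (Finset.prod_ne_zero_iff.2
            fun i hi => hg i (Finset.mem_insert_of_mem hi))),
        ih fun i hi => hg i (Finset.mem_insert_of_mem hi)]

lemma steinhaus_factor (hf : IsSteinhausRMF μ f) (ω : Ω) {n : ℕ} (hn : n ≠ 0) :
    f n ω = ∏ p ∈ n.primeFactors, f p ω ^ n.factorization p := by
  conv_lhs => rw [← prod_primeFactors_pow_factorization hn]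
  rw [steinhaus_prod hf ω n.primeFactors (fun p => p ^ n.factorization p)
      (fun p hp => pow_ne_zero _ (Nat.prime_of_mem_primeFactors hp).pos.ne')]
  exact Finset.prod_congr rfl fun p hp =>
    steinhaus_pow hf ω (Nat.prime_of_mem_primeFactors hp).pos.ne' _

lemma sigmaAlg_eq (f : ℕ → Ω → ℂ) (y : ℝ) :
    sigmaAlg f y
      = ⨆ q ∈ {q : Nat.Primes | ((q : ℕ) : ℝ) ≤ y}, MeasurableSpace.comap (f q) inferInstance := by
  apply le_antisymm
  · refine iSup₂_le fun p hp => ?_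
    exact le_iSup₂ (f := fun (q : Nat.Primes) (_ : q ∈ {q : Nat.Primes | ((q : ℕ) : ℝ) ≤ y}) =>
      MeasurableSpace.comap (f q) inferInstance) ⟨p, hp.1⟩ hp.2
  · refine iSup₂_le fun q hq => ?_
    exact le_iSup₂ (f := fun (p : ℕ) (_ : p ∈ {p : ℕ | p.Prime ∧ (p : ℝ) ≤ y}) =>
      MeasurableSpace.comap (f p) inferInstance) (q : ℕ) ⟨q.2, hq⟩

lemma steinhaus_measurable_sup (hf : IsSteinhausRMF μ f) {P : Set Nat.Primes} {n : ℕ}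
    (hn : n ≠ 0) (hsub : ∀ q : Nat.Primes, (q : ℕ) ∣ n → q ∈ P) :
    Measurable[⨆ q ∈ P, MeasurableSpace.comap (f (q : ℕ)) inferInstance] (f n) := by
  have hrw : f n = fun ω => ∏ p ∈ n.primeFactors, f p ω ^ n.factorization p :=
    funext fun ω => steinhaus_factor hf ω hn
  rw [hrw]
  refine Finset.measurable_prod _ fun p hp => ?_
  have hpp := Nat.prime_of_mem_primeFactors hp
  have hle : MeasurableSpace.comap (f p) inferInstance
      ≤ ⨆ q ∈ P, MeasurableSpace.comap (f (q : ℕ)) inferInstance :=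
    le_iSup₂ (f := fun (q : Nat.Primes) (_ : q ∈ P) =>
      MeasurableSpace.comap (f (q : ℕ)) inferInstance)
      (⟨p, hpp⟩ : Nat.Primes) (hsub ⟨p, hpp⟩ (Nat.dvd_of_mem_primeFactors hp))
  exact ((Measurable.of_comap_le le_rfl).le hle).pow_const _

lemma circle_moment {a b : ℕ} (hab : a ≠ b) :
    ∫ z, z ^ a * (starRingEnd ℂ) (z ^ b) ∂circleUniform = 0 := by
  have hφ : Measurable fun θ : ℝ => Complex.exp (2 * Real.pi * θ * Complex.I) := by
    fun_prop
  have hg : Continuous fun z : ℂ => z ^ a * (starRingEnd ℂ) (z ^ b) := by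
    simp only [starRingEnd_apply]
    exact (continuous_pow a).mul (continuous_star.comp (continuous_pow b))
  rw [circleUniform, integral_map hφ.aemeasurable hg.aestronglyMeasurable]
  set c : ℂ := (((a : ℤ) - (b : ℤ) : ℤ) : ℂ) * (2 * Real.pi * Complex.I) with hc
  have hcne : c ≠ 0 := by
    refine mul_ne_zero ?_ ?_
    · rw [Int.cast_ne_zero, sub_ne_zero]
      exact_mod_cast hab
    · simp [Real.pi_ne_zero, Complex.I_ne_zero, Complex.ofReal_ne_zero]
  have key : ∀ θ : ℝ,
      Complex.exp (2 * Real.pi * θ * Complex.I) ^ a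
        * (starRingEnd ℂ) (Complex.exp (2 * Real.pi * θ * Complex.I) ^ b)
      = Complex.exp (c * θ) := by
    intro θ
    rw [map_pow, ← Complex.exp_conj]
    have hconj : (starRingEnd ℂ) (2 * Real.pi * θ * Complex.I)
        = -(2 * Real.pi * θ * Complex.I) := by
      simp only [map_mul, Complex.conj_I, Complex.conj_ofReal, map_ofNat]
      ring
    rw [hconj, ← Complex.exp_nat_mul, ← Complex.exp_nat_mul, ← Complex.exp_add]
    congr 1
    rw [hc]
    push_cast
    ring
  rw [show (fun θ : ℝ => Complex.exp (2 * Real.pi * θ * Complex.I) ^ a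
      * (starRingEnd ℂ) (Complex.exp (2 * Real.pi * θ * Complex.I) ^ b))
      = fun θ : ℝ => Complex.exp (c * θ) from funext key]
  rw [← intervalIntegral.integral_of_le zero_le_one, integral_exp_mul_complex hcne]
  have h1 : Complex.exp (c * 1) = 1 := by
    rw [mul_one, hc]
    exact_mod_cast Complex.exp_int_mul_two_pi_mul_I ((a : ℤ) - (b : ℤ))
  rw [Complex.ofReal_one, Complex.ofReal_zero, mul_zero, Complex.exp_zero, h1, sub_self,
    zero_div]

lemma steinhaus_pow_moment (hf : IsSteinhausRMF μ f) (p : Nat.Primes) {a b : ℕ} (hab : a ≠ b) :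
    ∫ ω, f (p : ℕ) ω ^ a * (starRingEnd ℂ) (f (p : ℕ) ω ^ b) ∂μ = 0 := by
  have hg : Continuous fun z : ℂ => z ^ a * (starRingEnd ℂ) (z ^ b) := by
    simp only [starRingEnd_apply]
    exact (continuous_pow a).mul (continuous_star.comp (continuous_pow b))
  have : ∫ ω, f (p : ℕ) ω ^ a * (starRingEnd ℂ) (f (p : ℕ) ω ^ b) ∂μ
      = ∫ z, z ^ a * (starRingEnd ℂ) (z ^ b) ∂(Measure.map (f (p : ℕ)) μ) :=
    (integral_map (hf.meas _).aemeasurable hg.aestronglyMeasurable).symm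
  rw [this, hf.unif p, circle_moment hab]

lemma integrable_of_bdd [IsFiniteMeasure μ] {E : Type*} [NormedAddCommGroup E] {g : Ω → E}
    (hg : AEStronglyMeasurable g μ) {C : ℝ} (h : ∀ ω, ‖g ω‖ ≤ C) : Integrable g μ :=
  (integrable_const C).mono' hg (Filter.Eventually.of_forall h)

lemma indepFun_integral_mul_complex {X Y : Ω → ℂ} (h : IndepFun X Y μ)
    (hX : Integrable X μ) (hY : Integrable Y μ) (hXY : Integrable (fun ω => X ω * Y ω) μ) :
    ∫ ω, X ω * Y ω ∂μ = (∫ ω, X ω ∂μ) * ∫ ω, Y ω ∂μ := by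
  have hXr : Integrable (fun ω => (X ω).re) μ := hX.re
  have hXi : Integrable (fun ω => (X ω).im) μ := hX.im
  have hYr : Integrable (fun ω => (Y ω).re) μ := hY.re
  have hYi : Integrable (fun ω => (Y ω).im) μ := hY.im
  have habs : ∀ (u v : ℂ) (a c : ℝ), |a| ≤ ‖u‖ → |c| ≤ ‖v‖ →
      ‖a * c‖ ≤ ‖u * v‖ := by
    intro u v a c ha hc
    rw [Real.norm_eq_abs, abs_mul, norm_mul]
    exact mul_le_mul ha hc (abs_nonneg _) (norm_nonneg _)
  have hprod : ∀ (gx gy : ℂ → ℝ), Measurable gx → Measurable gy →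
      (∀ z : ℂ, |gx z| ≤ ‖z‖) → (∀ z : ℂ, |gy z| ≤ ‖z‖) →
      Integrable (fun ω => gx (X ω) * gy (Y ω)) μ ∧
      ∫ ω, gx (X ω) * gy (Y ω) ∂μ = (∫ ω, gx (X ω) ∂μ) * ∫ ω, gy (Y ω) ∂μ := by
    intro gx gy hgx hgy hbx hby
    have hint : Integrable (fun ω => gx (X ω) * gy (Y ω)) μ := by
      refine hXY.norm.mono' ?_ (Filter.Eventually.of_forall fun ω => ?_)
      · exact ((hgx.comp_aemeasurable hX.aemeasurable).mul
          (hgy.comp_aemeasurable hY.aemeasurable)).aestronglyMeasurable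
      · simpa using habs (X ω) (Y ω) _ _ (hbx (X ω)) (hby (Y ω))
    refine ⟨hint, ?_⟩
    have hix : Integrable (fun ω => gx (X ω)) μ := by
      refine hX.norm.mono' ((hgx.comp_aemeasurable hX.aemeasurable).aestronglyMeasurable)
        (Filter.Eventually.of_forall fun ω => ?_)
      simpa [Real.norm_eq_abs] using hbx (X ω)
    have hiy : Integrable (fun ω => gy (Y ω)) μ := by
      refine hY.norm.mono' ((hgy.comp_aemeasurable hY.aemeasurable).aestronglyMeasurable)
        (Filter.Eventually.of_forall fun ω => ?_)
      simpa [Real.norm_eq_abs] using hby (Y ω)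
    have hi : IndepFun (fun ω => gx (X ω)) (fun ω => gy (Y ω)) μ := h.comp hgx hgy
    have := hi.integral_fun_mul_eq_mul_integral hix.aestronglyMeasurable hiy.aestronglyMeasurable
    simpa [Pi.mul_apply] using this
  have h_re : ∀ {g : Ω → ℂ}, Integrable g μ → (∫ ω, g ω ∂μ).re = ∫ ω, (g ω).re ∂μ :=
    fun hg => (integral_re hg).symm
  have h_im : ∀ {g : Ω → ℂ}, Integrable g μ → (∫ ω, g ω ∂μ).im = ∫ ω, (g ω).im ∂μ :=
    fun hg => (integral_im hg).symm
  obtain ⟨hrr_int, hrr⟩ := hprod Complex.re Complex.re Complex.measurable_re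
    Complex.measurable_re (fun z => Complex.abs_re_le_norm z) (fun z => Complex.abs_re_le_norm z)
  obtain ⟨hii_int, hii⟩ := hprod Complex.im Complex.im Complex.measurable_im
    Complex.measurable_im (fun z => Complex.abs_im_le_norm z) (fun z => Complex.abs_im_le_norm z)
  obtain ⟨hri_int, hri⟩ := hprod Complex.re Complex.im Complex.measurable_re
    Complex.measurable_im (fun z => Complex.abs_re_le_norm z) (fun z => Complex.abs_im_le_norm z)
  obtain ⟨hir_int, hir⟩ := hprod Complex.im Complex.re Complex.measurable_im
    Complex.measurable_re (fun z => Complex.abs_im_le_norm z) (fun z => Complex.abs_re_le_norm z)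
  apply Complex.ext
  · rw [h_re hXY, Complex.mul_re, h_re hX, h_re hY, h_im hX, h_im hY, ← hrr, ← hii,
      ← integral_sub hrr_int hii_int]
    refine integral_congr_ae (Filter.Eventually.of_forall fun ω => ?_)
    simp [Complex.mul_re]
  · rw [h_im hXY, Complex.mul_im, h_re hX, h_re hY, h_im hX, h_im hY, ← hri, ← hir,
      ← integral_add hri_int hir_int]
    refine integral_congr_ae (Filter.Eventually.of_forall fun ω => ?_)
    simp [Complex.mul_im]

end AuxB


section AuxC

open Complex MeasurableSpace

variable {Ω : Type*} [MeasurableSpace Ω] {μ : Measure Ω} [IsProbabilityMeasure μ]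
  {f : ℕ → Ω → ℂ}

lemma measurable_conj' : Measurable (starRingEnd ℂ) :=
  continuous_conj.measurable

lemma steinhaus_offdiag_moment (hf : IsSteinhausRMF μ f) {m m' : ℕ}
    (hm : m ≠ 0) (hm' : m' ≠ 0) (hne : m ≠ m') :
    ∫ ω, f m ω * (starRingEnd ℂ) (f m' ω) ∂μ = 0 := by
  have hfac : m.factorization ≠ m'.factorization := fun h =>
    hne (Nat.factorization_inj hm hm' h)
  obtain ⟨p, hp⟩ : ∃ p, m.factorization p ≠ m'.factorization p := by
    by_contra h
    push_neg at h
    exact hfac (Finsupp.ext h)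
  have hpp : p.Prime := by
    by_contra hnp
    rw [Nat.factorization_eq_zero_of_not_prime m hnp,
      Nat.factorization_eq_zero_of_not_prime m' hnp] at hp
    exact hp rfl
  set a := m.factorization p with ha
  set b := m'.factorization p with hb
  set u := m / p ^ a with hudef
  set u' := m' / p ^ b with hudef'
  have hmu : p ^ a * u = m := Nat.ordProj_mul_ordCompl_eq_self m p
  have hmu' : p ^ b * u' = m' := Nat.ordProj_mul_ordCompl_eq_self m' p
  have hu0 : u ≠ 0 := (Nat.ordCompl_pos p hm).ne'
  have hu0' : u' ≠ 0 := (Nat.ordCompl_pos p hm').ne'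
  have hpu : ¬ (p ∣ u) := Nat.not_dvd_ordCompl hpp hm
  have hpu' : ¬ (p ∣ u') := Nat.not_dvd_ordCompl hpp hm'
  have hsplit : ∀ ω, f m ω * (starRingEnd ℂ) (f m' ω)
      = (f p ω ^ a * (starRingEnd ℂ) (f p ω ^ b))
        * (f u ω * (starRingEnd ℂ) (f u' ω)) := by
    intro ω
    have h1 : f m ω = f p ω ^ a * f u ω := by
      rw [← hmu, hf.mult ω _ _ (Nat.one_le_iff_ne_zero.2 (pow_ne_zero _ hpp.pos.ne'))
        (Nat.one_le_iff_ne_zero.2 hu0), steinhaus_pow hf ω hpp.pos.ne']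
    have h2 : f m' ω = f p ω ^ b * f u' ω := by
      rw [← hmu', hf.mult ω _ _ (Nat.one_le_iff_ne_zero.2 (pow_ne_zero _ hpp.pos.ne'))
        (Nat.one_le_iff_ne_zero.2 hu0'), steinhaus_pow hf ω hpp.pos.ne']
    rw [h1, h2, map_mul]
    ring
  -- measurability
  have hXm : Measurable[MeasurableSpace.comap (f p) inferInstance]
      (fun ω => f p ω ^ a * (starRingEnd ℂ) (f p ω ^ b)) := by
    have h0 : Measurable[MeasurableSpace.comap (f p) inferInstance] (f p) :=
      Measurable.of_comap_le le_rfl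
    exact (h0.pow_const a).mul (measurable_conj'.comp (h0.pow_const b))
  have hYm : Measurable[⨆ q ∈ ({(⟨p, hpp⟩ : Nat.Primes)}ᶜ : Set Nat.Primes),
      MeasurableSpace.comap (f (q : ℕ)) inferInstance]
      (fun ω => f u ω * (starRingEnd ℂ) (f u' ω)) := by
    have h1 := steinhaus_measurable_sup hf (P := ({(⟨p, hpp⟩ : Nat.Primes)}ᶜ : Set Nat.Primes))
      hu0 (fun q hq => by
        simp only [Set.mem_compl_iff, Set.mem_singleton_iff]
        rintro rfl
        exact hpu hq)
    have h2 := steinhaus_measurable_sup hf (P := ({(⟨p, hpp⟩ : Nat.Primes)}ᶜ : Set Nat.Primes))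
      hu0' (fun q hq => by
        simp only [Set.mem_compl_iff, Set.mem_singleton_iff]
        rintro rfl
        exact hpu' hq)
    exact h1.mul (measurable_conj'.comp h2)
  -- independence
  have hbase := indep_biSup_compl (fun q : Nat.Primes => (hf.meas (q : ℕ)).comap_le) hf.indep
      ({(⟨p, hpp⟩ : Nat.Primes)} : Set Nat.Primes)
  have hle1 : MeasurableSpace.comap (f p) inferInstance
      ≤ ⨆ q ∈ ({(⟨p, hpp⟩ : Nat.Primes)} : Set Nat.Primes),
          MeasurableSpace.comap (f (q : ℕ)) inferInstance :=
    le_iSup₂ (f := fun (q : Nat.Primes) (_ : q ∈ ({(⟨p, hpp⟩ : Nat.Primes)} : Set Nat.Primes)) =>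
      MeasurableSpace.comap (f (q : ℕ)) inferInstance) (⟨p, hpp⟩ : Nat.Primes) rfl
  have hIF : IndepFun (fun ω => f p ω ^ a * (starRingEnd ℂ) (f p ω ^ b))
      (fun ω => f u ω * (starRingEnd ℂ) (f u' ω)) μ := by
    rw [IndepFun_iff_Indep]
    exact indep_of_indep_of_le_right
      (indep_of_indep_of_le_left (indep_of_indep_of_le_left hbase hle1) hXm.comap_le)
      hYm.comap_le
  -- integrability
  have habs1 : ∀ (k : ℕ) (ω : Ω), k ≠ 0 → ‖f k ω‖ = 1 := fun k ω hk =>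
    hf.unimodular ω k (Nat.one_le_iff_ne_zero.2 hk)
  have hXint : Integrable (fun ω => f p ω ^ a * (starRingEnd ℂ) (f p ω ^ b)) μ := by
    refine integrable_of_bdd (C := 1)
      ((((hf.meas p).pow_const a).mul
        (measurable_conj'.comp ((hf.meas p).pow_const b))).aestronglyMeasurable) fun ω => ?_
    simp [norm_mul, map_mul, map_pow, Complex.norm_conj, habs1 p ω hpp.pos.ne']
  have hYint : Integrable (fun ω => f u ω * (starRingEnd ℂ) (f u' ω)) μ := by
    refine integrable_of_bdd (C := 1)
      (((hf.meas u).mul (measurable_conj'.comp (hf.meas u'))).aestronglyMeasurable) fun ω => ?_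
    simp [norm_mul, map_mul, Complex.norm_conj, habs1 u ω hu0, habs1 u' ω hu0']
  have hXYint : Integrable (fun ω =>
      (f p ω ^ a * (starRingEnd ℂ) (f p ω ^ b)) * (f u ω * (starRingEnd ℂ) (f u' ω))) μ := by
    refine integrable_of_bdd (C := 1) ?_ fun ω => ?_
    · exact ((((hf.meas p).pow_const a).mul
        (measurable_conj'.comp ((hf.meas p).pow_const b))).mul
        ((hf.meas u).mul (measurable_conj'.comp (hf.meas u')))).aestronglyMeasurable
    · simp [norm_mul, map_mul, map_pow, Complex.norm_conj,
        habs1 p ω hpp.pos.ne', habs1 u ω hu0, habs1 u' ω hu0']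
  calc ∫ ω, f m ω * (starRingEnd ℂ) (f m' ω) ∂μ
      = ∫ ω, (f p ω ^ a * (starRingEnd ℂ) (f p ω ^ b))
          * (f u ω * (starRingEnd ℂ) (f u' ω)) ∂μ :=
        integral_congr_ae (Filter.Eventually.of_forall hsplit)
    _ = (∫ ω, f p ω ^ a * (starRingEnd ℂ) (f p ω ^ b) ∂μ)
          * ∫ ω, f u ω * (starRingEnd ℂ) (f u' ω) ∂μ :=
        indepFun_integral_mul_complex hIF hXint hYint hXYint
    _ = 0 := by
        rw [show (∫ ω, f p ω ^ a * (starRingEnd ℂ) (f p ω ^ b) ∂μ) = 0 from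
          steinhaus_pow_moment hf ⟨p, hpp⟩ hp, zero_mul]

end AuxC


section AuxD

open Complex MeasurableSpace

variable {Ω : Type*} [MeasurableSpace Ω] {μ : Measure Ω} [IsProbabilityMeasure μ]
  {f : ℕ → Ω → ℂ}

lemma setIntegral_offdiag (hf : IsSteinhausRMF μ f) {y : ℝ}
    {W : Ω → ℂ} (hWm : Measurable[sigmaAlg f y] W) {CW : ℝ}
    (hWbd : ∀ ω, ‖W ω‖ ≤ CW)
    {m m' : ℕ} (hm : m ≠ 0) (hm' : m' ≠ 0) (hne : m ≠ m')
    (hrm : IsRoughNum y m) (hrm' : IsRoughNum y m')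
    {s : Set Ω} (hs : MeasurableSet[sigmaAlg f y] s) :
    ∫ ω in s, (W ω * (f m ω * (starRingEnd ℂ) (f m' ω))).re ∂μ = 0 := by
  have hmle : sigmaAlg f y ≤ ‹MeasurableSpace Ω› :=
    iSup₂_le fun p hp => (hf.meas p).comap_le
  have hs0 : MeasurableSet s := hmle s hs
  have habs1 : ∀ (k : ℕ) (ω : Ω), k ≠ 0 → ‖f k ω‖ = 1 := fun k ω hk =>
    hf.unimodular ω k (Nat.one_le_iff_ne_zero.2 hk)
  have hWma : Measurable W := hWm.le hmle
  have hVm : Measurable (fun ω => f m ω * (starRingEnd ℂ) (f m' ω)) :=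
    (hf.meas m).mul (measurable_conj'.comp (hf.meas m'))
  have hVbd : ∀ ω, ‖f m ω * (starRingEnd ℂ) (f m' ω)‖ = 1 := by
    intro ω
    rw [norm_mul, Complex.norm_conj, habs1 m ω hm, habs1 m' ω hm', mul_one]
  have hintWV : Integrable (fun ω => W ω * (f m ω * (starRingEnd ℂ) (f m' ω))) μ := by
    refine integrable_of_bdd (C := CW) ((hWma.mul hVm).aestronglyMeasurable) fun ω => ?_
    rw [norm_mul, hVbd ω, mul_one]
    exact hWbd ω
  suffices hZ : ∫ ω in s, W ω * (f m ω * (starRingEnd ℂ) (f m' ω)) ∂μ = 0 by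
    have h1 := integral_re (μ := μ.restrict s) hintWV.restrict
    rw [hZ] at h1
    simpa using h1
  rw [← integral_indicator hs0]
  have hind : Set.indicator s (fun ω => W ω * (f m ω * (starRingEnd ℂ) (f m' ω)))
      = fun ω => (Set.indicator s W ω) * (f m ω * (starRingEnd ℂ) (f m' ω)) := by
    funext ω
    by_cases hω : ω ∈ s <;>
      simp [Set.indicator_of_mem, Set.indicator_of_notMem, hω]
  rw [hind]
  -- independence
  have hbase := indep_biSup_compl (fun q : Nat.Primes => (hf.meas (q : ℕ)).comap_le) hf.indep
      ({q : Nat.Primes | ((q : ℕ) : ℝ) ≤ y})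
  have hWm' : Measurable[⨆ q ∈ {q : Nat.Primes | ((q : ℕ) : ℝ) ≤ y},
      MeasurableSpace.comap (f (q : ℕ)) inferInstance] (Set.indicator s W) := by
    rw [← sigmaAlg_eq f y]
    exact hWm.indicator hs
  have hVm' : Measurable[⨆ q ∈ ({q : Nat.Primes | ((q : ℕ) : ℝ) ≤ y}ᶜ : Set Nat.Primes),
      MeasurableSpace.comap (f (q : ℕ)) inferInstance]
      (fun ω => f m ω * (starRingEnd ℂ) (f m' ω)) := by
    have h1 := steinhaus_measurable_sup hf
      (P := ({q : Nat.Primes | ((q : ℕ) : ℝ) ≤ y}ᶜ : Set Nat.Primes)) hm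
      (fun q hq => by
        simp only [Set.mem_compl_iff, Set.mem_setOf_eq, not_le]
        exact hrm q q.2 hq)
    have h2 := steinhaus_measurable_sup hf
      (P := ({q : Nat.Primes | ((q : ℕ) : ℝ) ≤ y}ᶜ : Set Nat.Primes)) hm'
      (fun q hq => by
        simp only [Set.mem_compl_iff, Set.mem_setOf_eq, not_le]
        exact hrm' q q.2 hq)
    exact h1.mul (measurable_conj'.comp h2)
  have hIF : IndepFun (Set.indicator s W) (fun ω => f m ω * (starRingEnd ℂ) (f m' ω)) μ := by
    rw [IndepFun_iff_Indep]
    exact indep_of_indep_of_le_right (indep_of_indep_of_le_left hbase hWm'.comap_le)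
      hVm'.comap_le
  have hWindint : Integrable (Set.indicator s W) μ := by
    refine integrable_of_bdd (C := max CW 0) ((hWma.indicator hs0).aestronglyMeasurable)
      fun ω => ?_
    by_cases hω : ω ∈ s
    · rw [Set.indicator_of_mem hω]
      exact le_max_of_le_left (by simpa using hWbd ω)
    · rw [Set.indicator_of_notMem hω]
      simpa using le_max_right CW 0
  have hVint : Integrable (fun ω => f m ω * (starRingEnd ℂ) (f m' ω)) μ :=
    integrable_of_bdd (C := 1) hVm.aestronglyMeasurable fun ω => by
      rw [hVbd ω]
  have hWVint : Integrable
      (fun ω => Set.indicator s W ω * (f m ω * (starRingEnd ℂ) (f m' ω))) μ := by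
    refine integrable_of_bdd (C := max CW 0)
      (((hWma.indicator hs0).mul hVm).aestronglyMeasurable) fun ω => ?_
    rw [norm_mul, hVbd ω, mul_one]
    by_cases hω : ω ∈ s
    · rw [Set.indicator_of_mem hω]
      exact le_max_of_le_left (hWbd ω)
    · rw [Set.indicator_of_notMem hω]
      simpa using le_max_right CW 0
  simp only [hind]
  calc ∫ ω, Set.indicator s W ω * (f m ω * (starRingEnd ℂ) (f m' ω)) ∂μ
      = (∫ ω, Set.indicator s W ω ∂μ) * ∫ ω, f m ω * (starRingEnd ℂ) (f m' ω) ∂μ :=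
        indepFun_integral_mul_complex hIF hWindint hVint hWVint
    _ = 0 := by rw [steinhaus_offdiag_moment hf hm hm' hne, mul_zero]

end AuxD


/-- `E[|S_x|² | F_y] = |S_{x,y}|² + ∑_{y < m ≤ x, m y-rough} m⁻¹ |S_{x/m,y}|²` a.s. -/
theorem condexp_S_sq
    {Ω : Type*} [MeasurableSpace Ω] (μ : Measure Ω) [IsProbabilityMeasure μ]
    (f : ℕ → Ω → ℂ) (hf : IsSteinhausRMF μ f)
    (x y : ℝ) (hx : 1 ≤ x) (hy : 2 ≤ y) :
    μ[fun ω => ‖S f x ω‖ ^ 2 | sigmaAlg f y]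
      =ᵐ[μ] fun ω => ‖Ssm f y x ω‖ ^ 2 +
        ∑ m ∈ (Finset.Ioc ⌊y⌋₊ ⌊x⌋₊).filter (fun m => IsRoughNum y m),
          (m : ℝ)⁻¹ * ‖Ssm f y (x / m) ω‖ ^ 2 := by
  classical
  have hx0 : (0:ℝ) < x := lt_of_lt_of_le one_pos hx
  have hy0 : (0:ℝ) < y := lt_of_lt_of_le two_pos hy
  have hmle : sigmaAlg f y ≤ ‹MeasurableSpace Ω› :=
    iSup₂_le fun p hp => (hf.meas p).comap_le
  have hN1 : 1 ≤ ⌊x⌋₊ := Nat.le_floor (by exact_mod_cast hx)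
  have hfl2 : 2 ≤ ⌊y⌋₊ := Nat.le_floor (by exact_mod_cast hy)
  set R : Finset ℕ := (Finset.Icc 1 ⌊x⌋₊).filter (fun m => IsRoughNum y m) with hRdef
  set T : ℕ → Ω → ℂ := fun m ω =>
    ∑ a ∈ (Finset.Icc 1 ⌊x / (m : ℝ)⌋₊).filter (fun n => IsSmoothNum y n), f a ω with hTdef
  set C : ℕ → ℝ := fun m =>
    (((Finset.Icc 1 ⌊x / (m : ℝ)⌋₊).filter (fun n => IsSmoothNum y n)).card : ℝ) with hCdef
  -- basic facts
  have hRmem : ∀ m ∈ R, m ≠ 0 ∧ m ≤ ⌊x⌋₊ ∧ IsRoughNum y m := by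
    intro m hm'
    have h1 := Finset.mem_filter.1 hm'
    have h2 := Finset.mem_Icc.1 h1.1
    exact ⟨by omega, h2.2, h1.2⟩
  have hsum_bd : ∀ (s' : Finset ℕ) (ω : Ω), (∀ n ∈ s', 1 ≤ n) →
      ‖∑ n ∈ s', f n ω‖ ≤ (s'.card : ℝ) := by
    intro s' ω hmem
    calc ‖∑ n ∈ s', f n ω‖ ≤ ∑ n ∈ s', ‖f n ω‖ := by
          simpa using norm_sum_le s' (fun n => f n ω)
      _ = ∑ n ∈ s', (1:ℝ) := Finset.sum_congr rfl fun n hn => hf.unimodular ω n (hmem n hn)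
      _ = (s'.card : ℝ) := by simp
  have hTbd : ∀ m ω, ‖T m ω‖ ≤ C m := by
    intro m ω
    exact hsum_bd _ ω fun n hn => (Finset.mem_Icc.1 (Finset.mem_filter.1 hn).1).1
  have hC0 : ∀ m, 0 ≤ C m := fun m => Nat.cast_nonneg _
  have hTmeasA : ∀ m, Measurable (T m) := fun m =>
    Finset.measurable_sum _ fun a _ => hf.meas a
  have hTmeasS : ∀ m, Measurable[sigmaAlg f y] (T m) := by
    intro m
    rw [sigmaAlg_eq f y]
    refine Finset.measurable_sum _ fun a hamem => ?_
    have ha := Finset.mem_filter.1 hamem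
    have ha1 : a ≠ 0 := by
      have := (Finset.mem_Icc.1 ha.1).1; omega
    exact steinhaus_measurable_sup hf ha1 (fun q hq => ha.2 q q.2 hq)
  have habs2 : ∀ (t : ℝ) (w : ℂ), 0 ≤ t →
      ‖(Real.sqrt t)⁻¹ * w‖ ^ 2 = t⁻¹ * Complex.normSq w := by
    intro t w ht
    rw [norm_mul, Complex.norm_real, Real.norm_eq_abs, mul_pow, Complex.sq_norm,
      abs_of_nonneg (inv_nonneg.2 (Real.sqrt_nonneg t)), inv_pow, Real.sq_sqrt ht]
  -- pointwise identity for the RHS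
  have hRsplit : R = insert 1 ((Finset.Ioc ⌊y⌋₊ ⌊x⌋₊).filter (fun m => IsRoughNum y m)) := by
    ext m
    simp only [hRdef, Finset.mem_insert, Finset.mem_filter, Finset.mem_Icc, Finset.mem_Ioc]
    constructor
    · rintro ⟨⟨h1, h2⟩, h3⟩
      by_cases hm1 : m = 1
      · exact Or.inl hm1
      · refine Or.inr ⟨⟨?_, h2⟩, h3⟩
        have hq := h3 m.minFac (Nat.minFac_prime hm1) m.minFac_dvd
        have hym : y < (m : ℝ) :=
          lt_of_lt_of_le hq (Nat.cast_le.2 (Nat.minFac_le (by omega)))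
        exact (Nat.floor_lt hy0.le).2 hym
    · rintro (rfl | ⟨⟨h1, h2⟩, h3⟩)
      · refine ⟨⟨le_refl 1, hN1⟩, fun p hp hdvd => ?_⟩
        exact absurd (Nat.dvd_one.1 hdvd) hp.ne_one
      · exact ⟨⟨by omega, h2⟩, h3⟩
  have h1notin : (1 : ℕ) ∉ (Finset.Ioc ⌊y⌋₊ ⌊x⌋₊).filter (fun m => IsRoughNum y m) := by
    intro hmem
    have := (Finset.mem_Ioc.1 (Finset.mem_filter.1 hmem).1).1
    omega
  have hpoint : ∀ ω, ‖Ssm f y x ω‖ ^ 2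
      + ∑ m ∈ (Finset.Ioc ⌊y⌋₊ ⌊x⌋₊).filter (fun m => IsRoughNum y m),
          (m : ℝ)⁻¹ * ‖Ssm f y (x / m) ω‖ ^ 2
      = x⁻¹ * ∑ m ∈ R, Complex.normSq (T m ω) := by
    intro ω
    rw [hRsplit, Finset.sum_insert h1notin, mul_add]
    congr 1
    · have hT1 : T 1 ω = ∑ a ∈ (Finset.Icc 1 ⌊x⌋₊).filter (fun n => IsSmoothNum y n), f a ω := by
        simp only [hTdef, Nat.cast_one, div_one]
      rw [Ssm, hT1.symm]
      exact habs2 x _ hx0.le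
    · rw [Finset.mul_sum]
      refine Finset.sum_congr rfl fun m hmem => ?_
      have hm2 : ⌊y⌋₊ < m := (Finset.mem_Ioc.1 (Finset.mem_filter.1 hmem).1).1
      have hm0 : (0:ℝ) < (m : ℝ) := by
        have : 0 < m := by omega
        exact_mod_cast this
      have hstep : ‖Ssm f y (x / m) ω‖ ^ 2
          = (x / (m:ℝ))⁻¹ * Complex.normSq (T m ω) := by
        rw [Ssm]
        exact habs2 (x / (m:ℝ)) _ (div_nonneg hx0.le hm0.le)
      rw [hstep, inv_div]
      field_simp
  rw [show (fun ω => ‖Ssm f y x ω‖ ^ 2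
      + ∑ m ∈ (Finset.Ioc ⌊y⌋₊ ⌊x⌋₊).filter (fun m => IsRoughNum y m),
          (m : ℝ)⁻¹ * ‖Ssm f y (x / m) ω‖ ^ 2)
      = fun ω => x⁻¹ * ∑ m ∈ R, Complex.normSq (T m ω) from funext hpoint]
  -- apply uniqueness of conditional expectation
  haveI : SigmaFinite (μ.trim hmle) := by
    have : IsFiniteMeasure (μ.trim hmle) := isFiniteMeasure_trim hmle
    infer_instance
  -- integrand bound for S
  have hSmeas : Measurable (fun ω => ‖S f x ω‖ ^ 2) := by
    have h1 : Measurable (S f x) := by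
      refine Measurable.const_mul ?_ _
      exact Finset.measurable_sum _ fun n _ => hf.meas n
    exact (continuous_norm.measurable.comp h1).pow_const 2
  have hSbd : ∀ ω, ‖S f x ω‖
      ≤ (Real.sqrt x)⁻¹ * ((Finset.Icc 1 ⌊x⌋₊).card : ℝ) := by
    intro ω
    rw [S, norm_mul, Complex.norm_real, Real.norm_eq_abs, abs_of_nonneg (inv_nonneg.2 (Real.sqrt_nonneg x))]
    exact mul_le_mul_of_nonneg_left
      (hsum_bd _ ω fun n hn => (Finset.mem_Icc.1 hn).1)
      (inv_nonneg.2 (Real.sqrt_nonneg x))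
  have hSint : Integrable (fun ω => ‖S f x ω‖ ^ 2) μ := by
    refine integrable_of_bdd
      (C := ((Real.sqrt x)⁻¹ * ((Finset.Icc 1 ⌊x⌋₊).card : ℝ)) ^ 2)
      hSmeas.aestronglyMeasurable fun ω => ?_
    rw [Real.norm_eq_abs, abs_of_nonneg (by positivity)]
    exact pow_le_pow_left₀ (norm_nonneg _) (hSbd ω) 2
  -- integrability of the T-functions
  have hnsqTint : ∀ m, Integrable (fun ω => Complex.normSq (T m ω)) μ := by
    intro m
    refine integrable_of_bdd (C := C m ^ 2)
      ((Complex.continuous_normSq.measurable.comp (hTmeasA m)).aestronglyMeasurable)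
      fun ω => ?_
    rw [Real.norm_eq_abs, abs_of_nonneg (Complex.normSq_nonneg _), ← Complex.sq_norm]
    exact pow_le_pow_left₀ (norm_nonneg _) (hTbd m ω) 2
  have hgint : Integrable (fun ω => x⁻¹ * ∑ m ∈ R, Complex.normSq (T m ω)) μ :=
    (integrable_finset_sum R fun m _ => hnsqTint m).const_mul _
  -- measurability of the RHS wrt the sigma algebra
  have hgm : AEStronglyMeasurable[sigmaAlg f y]
      (fun ω => x⁻¹ * ∑ m ∈ R, Complex.normSq (T m ω)) μ := by
    refine StronglyMeasurable.aestronglyMeasurable (Measurable.stronglyMeasurable ?_)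
    refine Measurable.const_mul ?_ _
    exact Finset.measurable_sum _ fun m _ =>
      Complex.continuous_normSq.measurable.comp (hTmeasS m)
  -- the Z functions and their integrability
  have hZmeas : ∀ m m', Measurable (fun ω =>
      ((T m ω * (starRingEnd ℂ) (T m' ω)) * (f m ω * (starRingEnd ℂ) (f m' ω))).re) := by
    intro m m'
    refine Complex.measurable_re.comp ?_
    exact ((hTmeasA m).mul (measurable_conj'.comp (hTmeasA m'))).mul
      ((hf.meas m).mul (measurable_conj'.comp (hf.meas m')))
  have hZbd : ∀ m m', ∀ mh : m ∈ R, ∀ mh' : m' ∈ R, ∀ ω,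
      |((T m ω * (starRingEnd ℂ) (T m' ω)) * (f m ω * (starRingEnd ℂ) (f m' ω))).re|
        ≤ C m * C m' := by
    intro m m' hm hm' ω
    calc |((T m ω * (starRingEnd ℂ) (T m' ω)) * (f m ω * (starRingEnd ℂ) (f m' ω))).re|
        ≤ ‖(T m ω * (starRingEnd ℂ) (T m' ω))
            * (f m ω * (starRingEnd ℂ) (f m' ω))‖ := Complex.abs_re_le_norm _
      _ = ‖T m ω‖ * ‖T m' ω‖
            * (‖f m ω‖ * ‖f m' ω‖) := by
          simp [norm_mul, Complex.norm_conj]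
      _ = ‖T m ω‖ * ‖T m' ω‖ := by
          rw [hf.unimodular ω m (Nat.one_le_iff_ne_zero.2 (hRmem m hm).1),
            hf.unimodular ω m' (Nat.one_le_iff_ne_zero.2 (hRmem m' hm').1), mul_one, mul_one]
      _ ≤ C m * C m' := mul_le_mul (hTbd m ω) (hTbd m' ω) (norm_nonneg _) (hC0 m)
  have hZint : ∀ m m', m ∈ R → m' ∈ R → Integrable (fun ω =>
      ((T m ω * (starRingEnd ℂ) (T m' ω)) * (f m ω * (starRingEnd ℂ) (f m' ω))).re) μ := by
    intro m m' hm hm'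
    exact integrable_of_bdd (C := C m * C m') (hZmeas m m').aestronglyMeasurable
      fun ω => by
        rw [Real.norm_eq_abs]
        exact hZbd m m' hm hm' ω
  -- pointwise expansion of |S_x|^2
  have hpointS : ∀ ω, ‖S f x ω‖ ^ 2
      = x⁻¹ * ∑ m ∈ R, ∑ m' ∈ R,
          ((T m ω * (starRingEnd ℂ) (T m' ω)) * (f m ω * (starRingEnd ℂ) (f m' ω))).re := by
    intro ω
    have hdec := sum_decomp_aux (fun n => f n ω) (fun m a h1 h2 => hf.mult ω m a h1 h2) x y hx
    have hW : ‖S f x ω‖ ^ 2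
        = x⁻¹ * Complex.normSq (∑ m ∈ R, f m ω * T m ω) := by
      rw [S, hdec]
      exact habs2 x _ hx0.le
    rw [hW]
    congr 1
    have hnsq : Complex.normSq (∑ m ∈ R, f m ω * T m ω)
        = ((∑ m ∈ R, f m ω * T m ω)
            * (starRingEnd ℂ) (∑ m' ∈ R, f m' ω * T m' ω)).re := by
      rw [Complex.mul_conj, Complex.ofReal_re]
    rw [hnsq, map_sum, Finset.sum_mul_sum, Complex.re_sum]
    refine Finset.sum_congr rfl fun m hm => ?_
    rw [Complex.re_sum]
    refine Finset.sum_congr rfl fun m' hm' => ?_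
    congr 1
    rw [map_mul]
    ring
  -- the set-integral identity
  have hgeq : ∀ s : Set Ω, MeasurableSet[sigmaAlg f y] s → μ s < ⊤ →
      ∫ ω in s, (x⁻¹ * ∑ m ∈ R, Complex.normSq (T m ω)) ∂μ
        = ∫ ω in s, ‖S f x ω‖ ^ 2 ∂μ := by
    intro s hs _
    have hs0 : MeasurableSet s := hmle s hs
    rw [show (fun ω => ‖S f x ω‖ ^ 2)
        = fun ω => x⁻¹ * ∑ m ∈ R, ∑ m' ∈ R,
            ((T m ω * (starRingEnd ℂ) (T m' ω)) * (f m ω * (starRingEnd ℂ) (f m' ω))).re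
        from funext hpointS]
    rw [integral_const_mul, integral_const_mul]
    congr 1
    rw [integral_finset_sum _ fun m hm => (hnsqTint m).restrict,
      integral_finset_sum _ fun m hm =>
        (integrable_finset_sum R fun m' hm' => (hZint m m' hm hm').restrict)]
    refine Finset.sum_congr rfl fun m hm => ?_
    rw [integral_finset_sum _ fun m' hm' => (hZint m m' hm hm').restrict]
    rw [Finset.sum_eq_single_of_mem m hm]
    · -- diagonal term
      have hdiag : ∀ ω, ((T m ω * (starRingEnd ℂ) (T m ω))
          * (f m ω * (starRingEnd ℂ) (f m ω))).re = Complex.normSq (T m ω) := by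
        intro ω
        have h1 : Complex.normSq (f m ω) = 1 := by
          rw [Complex.normSq_eq_norm_sq,
            hf.unimodular ω m (Nat.one_le_iff_ne_zero.2 (hRmem m hm).1), one_pow]
        rw [Complex.mul_conj, Complex.mul_conj, h1, Complex.ofReal_one, mul_one,
          Complex.ofReal_re]
      rw [show (fun ω => ((T m ω * (starRingEnd ℂ) (T m ω))
          * (f m ω * (starRingEnd ℂ) (f m ω))).re)
          = fun ω => Complex.normSq (T m ω) from funext hdiag]
    · -- off-diagonal terms
      intro m' hm' hne
      refine setIntegral_offdiag hf ((hTmeasS m).mul (measurable_conj'.comp (hTmeasS m')))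
        (CW := C m * C m') ?_ (hRmem m hm).1 (hRmem m' hm').1 ?_
        (hRmem m hm).2.2 (hRmem m' hm').2.2 hs
      · intro ω
        show ‖T m ω * (starRingEnd ℂ) (T m' ω)‖ ≤ C m * C m'
        rw [norm_mul, Complex.norm_conj]
        exact mul_le_mul (hTbd m ω) (hTbd m' ω) (norm_nonneg _) (hC0 m)
      · exact fun h => hne (h ▸ rfl)
  refine (ae_eq_condExp_of_forall_setIntegral_eq hmle hSint
    (fun s _ _ => hgint.integrableOn) hgeq hgm).symm
end

section
/- There exist absolute constants A ≥ 0, c > 0 and K > 0 such that for all real x ≥ 2 and y ≥ 2, Ψ(x, y) ≤ K x (log y)^A e^{−c log x / log y} (Rankin's bound). Moreover, for every α > 0 one has Ψ(x, y) ≤ x^α ∏_{p ≤ y, p prime} (1 − p^{−α})^{−1}. -/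
open MeasureTheory ProbabilityTheory
open scoped Classical

section RankinAux


lemma harmonic_le (J : ℕ) (hJ : 1 ≤ J) :
    ∑ j ∈ Finset.Icc 1 J, (1:ℝ)/j ≤ 1 + Real.log J := by
  induction J with
  | zero => omega
  | succ n ih =>
    rcases Nat.eq_or_lt_of_le hJ with h | h
    · simp [← h]
    · have hn1 : 1 ≤ n := by omega
      have hn0 : (0:ℝ) < n := by exact_mod_cast hn1
      have key : (1:ℝ)/(n+1) ≤ Real.log (n+1) - Real.log n := by
        have hlog : Real.log ((n:ℝ)/(n+1)) ≤ (n:ℝ)/(n+1) - 1 :=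
          Real.log_le_sub_one_of_pos (by positivity)
        rw [Real.log_div hn0.ne' (by positivity)] at hlog
        have : (n:ℝ)/(n+1) - 1 = -(1/(n+1)) := by field_simp; ring
        rw [this] at hlog
        linarith
      rw [Finset.sum_Icc_succ_top (by omega : 1 ≤ n + 1)]
      have := ih hn1
      push_cast
      push_cast at key this
      linarith

-- count of primes in a dyadic block
lemma dyadic_prime_count (j : ℕ) (hj : 1 ≤ j) :
    ((Finset.Ioc (2^j) (2^(j+1))).filter Nat.Prime).card * j ≤ 2^(j+2) := by
  set T := (Finset.Ioc (2^j) (2^(j+1))).filter Nat.Prime with hT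
  have h1 : (2^j) ^ T.card ≤ ∏ p ∈ T, p := by
    refine Finset.pow_card_le_prod _ _ _ fun p hp => ?_
    have := (Finset.mem_filter.mp hp).1
    exact (Finset.mem_Ioc.mp this).1.le
  have h2 : ∏ p ∈ T, p ≤ primorial (2^(j+1)) := by
    refine Finset.prod_le_prod_of_subset_of_one_le' ?_ ?_
    · intro p hp
      simp only [hT, Finset.mem_filter, Finset.mem_Ioc] at hp
      simp only [primorial, Finset.mem_filter, Finset.mem_range]
      exact ⟨by omega, hp.2⟩
    · intro p hp _
      have := (Finset.mem_filter.mp hp).2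
      exact this.one_lt.le
  have h3 : primorial (2^(j+1)) ≤ 4 ^ (2^(j+1)) := primorial_le_4_pow _
  have h4 : (2:ℕ) ^ (j * T.card) ≤ 2 ^ (2^(j+2)) := by
    calc (2:ℕ) ^ (j * T.card) = (2^j) ^ T.card := by rw [pow_mul]
      _ ≤ 4 ^ (2^(j+1)) := le_trans h1 (le_trans h2 h3)
      _ = 2 ^ (2 * 2^(j+1)) := by rw [pow_mul]; norm_num
      _ = 2 ^ (2^(j+2)) := by ring_nf
  have h5 := (Nat.pow_le_pow_iff_right (by norm_num : 1 < 2)).mp h4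
  rw [mul_comm]; exact h5


lemma mertens_aux (y : ℝ) (hy : 2 ≤ y) :
    ∑ p ∈ (Finset.Icc 1 ⌊y⌋₊).filter Nat.Prime, (1:ℝ)/p ≤ 7 + 4 * Real.log (Real.log y) := by
  classical
  set N := ⌊y⌋₊ with hNdef
  have hN2 : 2 ≤ N := Nat.le_floor (by exact_mod_cast hy)
  set J := Nat.log 2 N with hJdef
  have hJ1 : 1 ≤ J := Nat.log_pos (by norm_num) hN2
  set T : ℕ → Finset ℕ := fun j => (Finset.Ioc (2^j) (2^(j+1))).filter Nat.Prime with hT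
  -- subset claim
  have hsub : (Finset.Icc 1 N).filter Nat.Prime ⊆ insert 2 ((Finset.Icc 1 J).biUnion T) := by
    intro p hp
    obtain ⟨hpIcc, hpp⟩ := Finset.mem_filter.mp hp
    obtain ⟨-, hpN⟩ := Finset.mem_Icc.mp hpIcc
    by_cases hp2 : p = 2
    · exact Finset.mem_insert.mpr (Or.inl hp2)
    · have hp3 : 3 ≤ p := by have := hpp.two_le; omega
      refine Finset.mem_insert.mpr (Or.inr ?_)
      rw [Finset.mem_biUnion]
      refine ⟨Nat.log 2 (p-1), ?_, ?_⟩
      · rw [Finset.mem_Icc]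
        constructor
        · exact Nat.log_pos (by norm_num) (by omega)
        · exact Nat.log_mono_right (by omega)
      · have hlow : 2 ^ Nat.log 2 (p-1) ≤ p - 1 := Nat.pow_log_le_self 2 (by omega)
        have hhigh : p - 1 < 2 ^ (Nat.log 2 (p-1) + 1) := Nat.lt_pow_succ_log_self (by norm_num) _
        simp only [hT, Finset.mem_filter, Finset.mem_Ioc]
        exact ⟨⟨by omega, by omega⟩, hpp⟩
  have h2notin : (2:ℕ) ∉ (Finset.Icc 1 J).biUnion T := by
    intro hmem
    obtain ⟨j, hj, hmem⟩ := Finset.mem_biUnion.mp hmem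
    obtain ⟨hj1, -⟩ := Finset.mem_Icc.mp hj
    have := (Finset.mem_Ioc.mp (Finset.mem_filter.mp hmem).1).1
    have h2j : 2 ≤ 2^j := le_trans (by norm_num) (Nat.pow_le_pow_right (by norm_num) hj1)
    omega
  have hdisj : (↑(Finset.Icc 1 J) : Set ℕ).PairwiseDisjoint T := by
    intro i hi j hj hij
    simp only [Function.onFun]
    refine Finset.disjoint_left.mpr fun p hpi hpj => ?_
    have h1 := Finset.mem_Ioc.mp (Finset.mem_filter.mp hpi).1
    have h2 := Finset.mem_Ioc.mp (Finset.mem_filter.mp hpj).1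
    rcases lt_or_gt_of_ne hij with h | h
    · have : (2:ℕ)^(i+1) ≤ 2^j := Nat.pow_le_pow_right (by norm_num) (by omega)
      omega
    · have : (2:ℕ)^(j+1) ≤ 2^i := Nat.pow_le_pow_right (by norm_num) (by omega)
      omega
  -- block sums
  have hblock : ∀ j ∈ Finset.Icc 1 J, ∑ p ∈ T j, (1:ℝ)/p ≤ 4/j := by
    intro j hj
    obtain ⟨hj1, -⟩ := Finset.mem_Icc.mp hj
    have hj0 : (0:ℝ) < j := by exact_mod_cast hj1
    have hcard := dyadic_prime_count j hj1
    have hsum : ∑ p ∈ T j, (1:ℝ)/p ≤ (T j).card • ((1:ℝ)/2^j) := by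
      refine Finset.sum_le_card_nsmul _ _ _ fun p hp => ?_
      have h1 := (Finset.mem_Ioc.mp (Finset.mem_filter.mp hp).1).1
      have hp0 : (0:ℝ) < 2^j := by positivity
      have hpc : (2:ℝ)^j ≤ p := by exact_mod_cast h1.le
      have hpgt : (0:ℝ) < p := lt_of_lt_of_le hp0 hpc
      exact one_div_le_one_div_of_le hp0 hpc
    rw [nsmul_eq_mul] at hsum
    have hcardR : ((T j).card : ℝ) * j ≤ 2^(j+2) := by exact_mod_cast hcard
    have h2j : (0:ℝ) < 2^j := by positivity
    calc ∑ p ∈ T j, (1:ℝ)/p ≤ ((T j).card : ℝ) * (1/2^j) := hsum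
      _ ≤ (2^(j+2)/j) * (1/2^j) := by
          refine mul_le_mul_of_nonneg_right ?_ (by positivity)
          rw [le_div_iff₀ hj0]; exact hcardR
      _ = 4/j := by
          rw [pow_add]
          field_simp
          ring
  -- J ≤ (3/2) log y
  have hL0 : (0:ℝ) < Real.log y := Real.log_pos (by linarith)
  have hJle : (J:ℝ) ≤ 3/2 * Real.log y := by
    have h2J : (2:ℝ)^J ≤ y := by
      have h1 : (2:ℕ)^J ≤ N := Nat.pow_log_le_self 2 (by omega)
      have h2 : ((N:ℕ):ℝ) ≤ y := Nat.floor_le (by linarith)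
      calc ((2:ℝ))^J = (((2:ℕ)^J : ℕ) : ℝ) := by push_cast; ring
        _ ≤ (N:ℝ) := by exact_mod_cast h1
        _ ≤ y := h2
    have hlog2 : (J:ℝ) * Real.log 2 ≤ Real.log y := by
      calc (J:ℝ) * Real.log 2 = Real.log ((2:ℝ)^J) := by rw [Real.log_pow]
        _ ≤ Real.log y := Real.log_le_log (by positivity) h2J
    have hl2 : (2:ℝ)/3 ≤ Real.log 2 := by
      have := Real.log_two_gt_d9
      linarith
    nlinarith [Nat.cast_nonneg (α := ℝ) J]
  have hlogJ : Real.log J ≤ 1/2 + Real.log (Real.log y) := by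
    have hJ0 : (0:ℝ) < J := by exact_mod_cast hJ1
    calc Real.log J ≤ Real.log (3/2 * Real.log y) := Real.log_le_log hJ0 hJle
      _ = Real.log (3/2) + Real.log (Real.log y) := Real.log_mul (by norm_num) hL0.ne'
      _ ≤ 1/2 + Real.log (Real.log y) := by
          have : Real.log (3/2) ≤ 1/2 := by
            have h := Real.add_one_le_exp (1/2 : ℝ)
            have : (3/2 : ℝ) ≤ Real.exp (1/2) := by linarith
            calc Real.log (3/2) ≤ Real.log (Real.exp (1/2)) :=
                  Real.log_le_log (by norm_num) this
              _ = 1/2 := Real.log_exp _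
          linarith
  -- assemble
  calc ∑ p ∈ (Finset.Icc 1 N).filter Nat.Prime, (1:ℝ)/p
      ≤ ∑ p ∈ insert 2 ((Finset.Icc 1 J).biUnion T), (1:ℝ)/p := by
        refine Finset.sum_le_sum_of_subset_of_nonneg hsub fun p _ _ => by positivity
    _ = 1/2 + ∑ p ∈ (Finset.Icc 1 J).biUnion T, (1:ℝ)/p := by
        rw [Finset.sum_insert h2notin]; norm_num
    _ = 1/2 + ∑ j ∈ Finset.Icc 1 J, ∑ p ∈ T j, (1:ℝ)/p := by
        rw [Finset.sum_biUnion hdisj]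
    _ ≤ 1/2 + ∑ j ∈ Finset.Icc 1 J, 4/(j:ℝ) := by
        have := Finset.sum_le_sum hblock
        linarith
    _ = 1/2 + 4 * ∑ j ∈ Finset.Icc 1 J, (1:ℝ)/j := by
        rw [Finset.mul_sum]
        congr 1
        exact Finset.sum_congr rfl fun j _ => by ring
    _ ≤ 1/2 + 4 * (1 + Real.log J) := by
        have := harmonic_le J hJ1
        linarith
    _ ≤ 7 + 4 * Real.log (Real.log y) := by linarith


lemma rankin_core (x y : ℝ) (hx : 2 ≤ x) (hy : 2 ≤ y) (a : ℝ) (ha : 0 < a) :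
    (Psi x y : ℝ) ≤ x ^ a *
      ∏ p ∈ (Finset.Icc 1 ⌊y⌋₊).filter Nat.Prime, (1 - (p : ℝ) ^ (-a))⁻¹ := by
  classical
  set P := (Finset.Icc 1 ⌊y⌋₊).filter Nat.Prime with hP
  set M := ⌊x⌋₊ with hM
  set S := (Finset.Icc 1 M).filter (fun n => IsSmoothNum y n) with hS
  have hx0 : (0:ℝ) < x := by linarith
  -- basic facts about members of S
  have hSn : ∀ n ∈ S, 1 ≤ n ∧ n ≤ M ∧ ∀ p : ℕ, p.Prime → p ∣ n → (p : ℝ) ≤ y := by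
    intro n hn
    simp only [hS, Finset.mem_filter, Finset.mem_Icc] at hn
    exact ⟨hn.1.1, hn.1.2, hn.2⟩
  have hsupp : ∀ n ∈ S, n.factorization.support ⊆ P := by
    intro n hn q hq
    obtain ⟨hn1, hnM, hsm⟩ := hSn n hn
    rw [Nat.support_factorization, Nat.mem_primeFactors] at hq
    obtain ⟨hqp, hqd, -⟩ := hq
    have hqy : (q : ℝ) ≤ y := hsm q hqp hqd
    simp only [hP, Finset.mem_filter, Finset.mem_Icc]
    exact ⟨⟨hqp.one_lt.le, Nat.le_floor hqy⟩, hqp⟩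
  -- Step 1
  have step1 : (Psi x y : ℝ) ≤ ∑ n ∈ S, x ^ a * (n:ℝ) ^ (-a) := by
    have : (Psi x y : ℝ) = ∑ n ∈ S, (1:ℝ) := by
      simp [Psi, hS, hM]
    rw [this]
    refine Finset.sum_le_sum fun n hn => ?_
    obtain ⟨hn1, hnM, -⟩ := hSn n hn
    have hn0 : (0:ℝ) < n := by exact_mod_cast hn1
    have hnx : (n:ℝ) ≤ x := le_trans (by exact_mod_cast hnM) (Nat.floor_le hx0.le)
    have h1 : (n:ℝ) ^ a ≤ x ^ a := Real.rpow_le_rpow hn0.le hnx ha.le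
    have h2 : (n:ℝ) ^ a * (n:ℝ) ^ (-a) = 1 := by
      rw [← Real.rpow_add hn0]; simp
    calc (1:ℝ) = (n:ℝ) ^ a * (n:ℝ) ^ (-a) := h2.symm
      _ ≤ x ^ a * (n:ℝ) ^ (-a) :=
        mul_le_mul_of_nonneg_right h1 (Real.rpow_nonneg hn0.le _)
  -- Step 2 : sum over smooth n of n^{-a} ≤ product of truncated geometric sums
  have step2 : ∑ n ∈ S, (n:ℝ) ^ (-a) ≤
      ∏ p ∈ P, ∑ k ∈ Finset.range (M+1), ((p:ℝ) ^ (-a)) ^ k := by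
    rw [Finset.prod_sum]
    set φ : ℕ → (∀ p : ℕ, p ∈ P → ℕ) := fun n p _ => n.factorization p with hφ
    have hmem : ∀ n ∈ S, φ n ∈ P.pi (fun _ => Finset.range (M+1)) := by
      intro n hn
      obtain ⟨hn1, hnM, -⟩ := hSn n hn
      rw [Finset.mem_pi]
      intro p hp
      rw [Finset.mem_range]
      show n.factorization p < M + 1
      have := Nat.factorization_lt p (show n ≠ 0 by omega)
      omega
    have hval : ∀ n ∈ S, ∏ p ∈ P.attach, ((p.1:ℝ) ^ (-a)) ^ (φ n p.1 p.2) = (n:ℝ) ^ (-a) := by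
      intro n hn
      obtain ⟨hn1, hnM, -⟩ := hSn n hn
      have hprod : ∏ p ∈ P, p ^ n.factorization p = n := by
        conv_rhs => rw [← Nat.factorization_prod_pow_eq_self (show n ≠ 0 by omega)]
        exact (Finsupp.prod_of_support_subset _ (hsupp n hn) _ (fun i _ => pow_zero i)).symm
      calc ∏ p ∈ P.attach, ((p.1:ℝ) ^ (-a)) ^ (φ n p.1 p.2)
          = ∏ p ∈ P, ((p:ℝ) ^ (-a)) ^ (n.factorization p) := by
            rw [← Finset.prod_attach P (fun p => ((p:ℝ) ^ (-a)) ^ (n.factorization p))]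
        _ = ∏ p ∈ P, (((p ^ n.factorization p : ℕ) : ℝ)) ^ (-a) := by
            refine Finset.prod_congr rfl fun p hp => ?_
            have hp0 : (0:ℝ) ≤ (p:ℝ) := Nat.cast_nonneg p
            rw [← Real.rpow_natCast ((p:ℝ) ^ (-a)) _, ← Real.rpow_mul hp0, mul_comm,
              Real.rpow_mul hp0, Real.rpow_natCast]
            push_cast
            ring_nf
        _ = ((∏ p ∈ P, (p ^ n.factorization p : ℕ) : ℕ) : ℝ) ^ (-a) := by
            rw [Nat.cast_prod]
            rw [← Real.finset_prod_rpow P _ (fun p _ => by positivity) (-a)]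
        _ = (n:ℝ) ^ (-a) := by rw [hprod]
    have hinj : ∀ n ∈ S, ∀ m ∈ S, φ n = φ m → n = m := by
      intro n hn m hm h
      obtain ⟨hn1, -, -⟩ := hSn n hn
      obtain ⟨hm1, -, -⟩ := hSn m hm
      have hfe : n.factorization = m.factorization := by
        ext q
        by_cases hq : q ∈ P
        · exact congrFun (congrFun h q) hq
        · have h1 : q ∉ n.factorization.support := fun hc => hq (hsupp n hn hc)
          have h2 : q ∉ m.factorization.support := fun hc => hq (hsupp m hm hc)
          rw [Finsupp.notMem_support_iff] at h1 h2
          rw [h1, h2]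
      exact Nat.factorization_inj (by simp; omega) (by simp; omega) hfe
    calc ∑ n ∈ S, (n:ℝ) ^ (-a)
        = ∑ n ∈ S, ∏ p ∈ P.attach, ((p.1:ℝ) ^ (-a)) ^ (φ n p.1 p.2) := by
          exact (Finset.sum_congr rfl hval).symm
      _ = ∑ g ∈ S.image φ, ∏ p ∈ P.attach, ((p.1:ℝ) ^ (-a)) ^ (g p.1 p.2) := by
          rw [Finset.sum_image hinj]
      _ ≤ ∑ g ∈ P.pi (fun _ => Finset.range (M+1)),
            ∏ p ∈ P.attach, ((p.1:ℝ) ^ (-a)) ^ (g p.1 p.2) := by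
          refine Finset.sum_le_sum_of_subset_of_nonneg ?_ fun g _ _ => ?_
          · intro g hg
            obtain ⟨n, hn, rfl⟩ := Finset.mem_image.mp hg
            exact hmem n hn
          · exact Finset.prod_nonneg fun p _ => pow_nonneg (Real.rpow_nonneg (Nat.cast_nonneg _) _) _
  -- Step 3 : geometric sums
  have step3 : ∏ p ∈ P, ∑ k ∈ Finset.range (M+1), ((p:ℝ) ^ (-a)) ^ k ≤
      ∏ p ∈ P, (1 - (p:ℝ) ^ (-a))⁻¹ := by
    refine Finset.prod_le_prod (fun p _ => Finset.sum_nonneg fun k _ =>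
      pow_nonneg (Real.rpow_nonneg (Nat.cast_nonneg _) _) _) fun p hp => ?_
    have hpp : p.Prime := (Finset.mem_filter.mp hp).2
    have hp1 : (1:ℝ) < p := by exact_mod_cast hpp.one_lt
    set r := (p:ℝ) ^ (-a) with hr
    have hr0 : 0 ≤ r := Real.rpow_nonneg (by positivity) _
    have hr1 : r < 1 := Real.rpow_lt_one_of_one_lt_of_neg hp1 (by linarith)
    have h1r : 0 < 1 - r := by linarith
    rw [geom_sum_eq (by linarith : r ≠ 1), div_le_iff_of_neg (by linarith : r - 1 < 0)]
    have hinv : (1 - r)⁻¹ * (1 - r) = 1 := inv_mul_cancel₀ h1r.ne'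
    have hpw : 0 ≤ r ^ (M+1) := pow_nonneg hr0 _
    nlinarith
  -- conclude
  calc (Psi x y : ℝ) ≤ ∑ n ∈ S, x ^ a * (n:ℝ) ^ (-a) := step1
    _ = x ^ a * ∑ n ∈ S, (n:ℝ) ^ (-a) := by rw [Finset.mul_sum]
    _ ≤ x ^ a * ∏ p ∈ P, (1 - (p:ℝ) ^ (-a))⁻¹ := by
        refine mul_le_mul_of_nonneg_left (le_trans step2 step3) (Real.rpow_nonneg hx0.le _)


lemma rankin_part1 (x y : ℝ) (hx : 2 ≤ x) (hy : 2 ≤ y) :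
    (Psi x y : ℝ) ≤ Real.exp 70 * x * Real.log y ^ (40:ℝ) *
      Real.exp (-(1/2) * Real.log x / Real.log y) := by
  classical
  set P := (Finset.Icc 1 ⌊y⌋₊).filter Nat.Prime with hP
  have hx0 : (0:ℝ) < x := by linarith
  set L := Real.log y with hL
  have hL2 : Real.log 2 ≤ L := Real.log_le_log (by norm_num) hy
  have hLhalf : 1/2 < L := by
    have := Real.log_two_gt_d9; linarith
  have hL0 : (0:ℝ) < L := by linarith
  set a := 1 - 1/(2*L) with ha_def
  have ha : 0 < a := by
    have h1 : 1/(2*L) < 1 := by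
      rw [div_lt_one (by linarith)]; linarith
    simp only [ha_def]; linarith
  have ehalf : Real.exp (1/2) ≤ 5/3 := by
    have h1 : Real.exp (1/2) * Real.exp (1/2) = Real.exp 1 := by
      rw [← Real.exp_add]; norm_num
    have h2 := Real.exp_one_lt_d9
    nlinarith [Real.exp_pos (1/2:ℝ)]
  -- bound on x^a
  have hxa : x ^ a = x * Real.exp (-(1/2) * Real.log x / L) := by
    rw [Real.rpow_def_of_pos hx0]
    conv_rhs => rw [← Real.exp_log hx0, ← Real.exp_add]
    congr 1
    have hLne : L ≠ 0 := ne_of_gt hL0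
    simp only [ha_def]
    field_simp
    rw [Real.log_exp]; ring
  -- bounds on p^{-a} for p in P
  have hfac1 : ∀ p ∈ P, (p:ℝ) ^ (-a) ≤ Real.exp (1/2) * (1/p) := by
    intro p hp
    obtain ⟨hpIcc, hpp⟩ := Finset.mem_filter.mp hp
    have hp2 : (2:ℝ) ≤ p := by exact_mod_cast hpp.two_le
    have hp0 : (0:ℝ) < p := by linarith
    have hpy : (p:ℝ) ≤ y := by
      obtain ⟨-, h2⟩ := Finset.mem_Icc.mp hpIcc
      calc (p:ℝ) ≤ (⌊y⌋₊ : ℝ) := by exact_mod_cast h2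
        _ ≤ y := Nat.floor_le (by linarith)
    have hlogp0 : 0 < Real.log p := Real.log_pos (by linarith)
    have hlogp : Real.log p ≤ L := Real.log_le_log hp0 hpy
    rw [Real.rpow_def_of_pos hp0]
    have hexp : Real.log p * (-a) ≤ -Real.log p + 1/2 := by
      have h1 : Real.log p * (1/(2*L)) ≤ L * (1/(2*L)) :=
        mul_le_mul_of_nonneg_right hlogp (by positivity)
      have h2 : L * (1/(2*L)) = 1/2 := by
        have hLne : L ≠ 0 := ne_of_gt hL0
        field_simp
      simp only [ha_def]
      nlinarith
    calc Real.exp (Real.log p * (-a)) ≤ Real.exp (-Real.log p + 1/2) :=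
          Real.exp_le_exp.mpr hexp
      _ = Real.exp (1/2) * (1/p) := by
          rw [Real.exp_add, Real.exp_neg, Real.exp_log hp0]
          ring
  have hfac2 : ∀ p ∈ P, (p:ℝ) ^ (-a) ≤ 5/6 := by
    intro p hp
    obtain ⟨hpIcc, hpp⟩ := Finset.mem_filter.mp hp
    have hp2 : (2:ℝ) ≤ p := by exact_mod_cast hpp.two_le
    have h1 := hfac1 p hp
    have h2 : (1:ℝ)/p ≤ 1/2 := by
      rw [div_le_div_iff₀ (by linarith) (by norm_num)]; linarith
    calc (p:ℝ) ^ (-a) ≤ Real.exp (1/2) * (1/p) := h1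
      _ ≤ (5/3) * (1/2) := by
          refine mul_le_mul ehalf h2 (by positivity) (by norm_num)
      _ = 5/6 := by norm_num
  -- product bound
  have hprod : ∏ p ∈ P, (1 - (p:ℝ) ^ (-a))⁻¹ ≤ Real.exp 70 * L ^ (40:ℝ) := by
    have hstep : ∏ p ∈ P, (1 - (p:ℝ) ^ (-a))⁻¹ ≤ ∏ p ∈ P, Real.exp (6 * (p:ℝ) ^ (-a)) := by
      refine Finset.prod_le_prod (fun p hp => ?_) (fun p hp => ?_)
      · have := hfac2 p hp
        have h1t : (0:ℝ) < 1 - (p:ℝ) ^ (-a) := by linarith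
        positivity
      · set t := (p:ℝ) ^ (-a) with ht
        have ht0 : 0 ≤ t := Real.rpow_nonneg (Nat.cast_nonneg p) _
        have ht56 : t ≤ 5/6 := hfac2 p hp
        have h1t : (0:ℝ) < 1 - t := by linarith
        have hstep1 : (1 - t)⁻¹ ≤ 1 + 6*t := by
          rw [← one_div, div_le_iff₀ h1t]
          nlinarith
        have hstep2 : 1 + 6*t ≤ Real.exp (6*t) := by
          have := Real.add_one_le_exp (6*t)
          linarith
        linarith
    have hexp : ∏ p ∈ P, Real.exp (6 * (p:ℝ) ^ (-a)) = Real.exp (∑ p ∈ P, 6 * (p:ℝ) ^ (-a)) :=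
      (Real.exp_sum _ _).symm
    have hsum1 : ∑ p ∈ P, 6 * (p:ℝ) ^ (-a) ≤ 10 * ∑ p ∈ P, (1:ℝ)/p := by
      have h1 : ∑ p ∈ P, 6 * (p:ℝ) ^ (-a) ≤ ∑ p ∈ P, 6 * (Real.exp (1/2) * (1/p)) := by
        refine Finset.sum_le_sum fun p hp => ?_
        have := hfac1 p hp; linarith
      have h2 : ∑ p ∈ P, 6 * (Real.exp (1/2) * (1/p)) =
          (6 * Real.exp (1/2)) * ∑ p ∈ P, (1:ℝ)/p := by
        rw [Finset.mul_sum]; exact Finset.sum_congr rfl fun p _ => by ring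
      have h3 : (0:ℝ) ≤ ∑ p ∈ P, (1:ℝ)/p :=
        Finset.sum_nonneg fun p _ => by positivity
      have h4 : 6 * Real.exp (1/2) ≤ 10 := by linarith
      calc ∑ p ∈ P, 6 * (p:ℝ) ^ (-a) ≤ (6 * Real.exp (1/2)) * ∑ p ∈ P, (1:ℝ)/p := by
            rw [← h2]; exact h1
        _ ≤ 10 * ∑ p ∈ P, (1:ℝ)/p := mul_le_mul_of_nonneg_right h4 h3
    have hsum2 := mertens_aux y hy
    have hfinal : ∑ p ∈ P, 6 * (p:ℝ) ^ (-a) ≤ 70 + 40 * Real.log L := by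
      calc ∑ p ∈ P, 6 * (p:ℝ) ^ (-a) ≤ 10 * ∑ p ∈ P, (1:ℝ)/p := hsum1
        _ ≤ 10 * (7 + 4 * Real.log L) := by
            refine mul_le_mul_of_nonneg_left ?_ (by norm_num)
            exact hsum2
        _ = 70 + 40 * Real.log L := by ring
    calc ∏ p ∈ P, (1 - (p:ℝ) ^ (-a))⁻¹ ≤ Real.exp (∑ p ∈ P, 6 * (p:ℝ) ^ (-a)) := by
          rw [← hexp]; exact hstep
      _ ≤ Real.exp (70 + 40 * Real.log L) := Real.exp_le_exp.mpr hfinal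
      _ = Real.exp 70 * L ^ (40:ℝ) := by
          rw [Real.exp_add, Real.rpow_def_of_pos hL0]
          ring_nf
  -- assemble
  have h := rankin_core x y hx hy a ha
  rw [← hP] at h
  calc (Psi x y : ℝ) ≤ x ^ a * ∏ p ∈ P, (1 - (p:ℝ) ^ (-a))⁻¹ := h
    _ ≤ x ^ a * (Real.exp 70 * L ^ (40:ℝ)) := by
        refine mul_le_mul_of_nonneg_left hprod (Real.rpow_nonneg hx0.le _)
    _ = Real.exp 70 * x * L ^ (40:ℝ) * Real.exp (-(1/2) * Real.log x / L) := by
        rw [hxa]; ring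

end RankinAux

/-- Rankin's bound for the count `Ψ(x,y)` of y-smooth numbers up to x,
together with the elementary bound `Ψ(x,y) ≤ x^α ∏_{p ≤ y} (1 - p^{-α})⁻¹`. -/
theorem rankin_smooth_bound :
    (∃ A c K : ℝ, 0 ≤ A ∧ 0 < c ∧ 0 < K ∧ ∀ x y : ℝ, 2 ≤ x → 2 ≤ y →
      (Psi x y : ℝ) ≤ K * x * Real.log y ^ A * Real.exp (-c * Real.log x / Real.log y)) ∧
    (∀ x y : ℝ, 2 ≤ x → 2 ≤ y → ∀ a : ℝ, 0 < a →
      (Psi x y : ℝ) ≤ x ^ a *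
        ∏ p ∈ (Finset.Icc 1 ⌊y⌋₊).filter Nat.Prime, (1 - (p : ℝ) ^ (-a))⁻¹) := by
  constructor
  · refine ⟨40, 1/2, Real.exp 70, by norm_num, by norm_num, Real.exp_pos 70, fun x y hx hy => ?_⟩
    have h := rankin_part1 x y hx hy
    convert h using 3 <;> norm_num
  · intro x y hx hy a ha
    exact rankin_core x y hx hy a ha
end

section
/- For all y ≥ 3, σ ≥ 1/2, s, t ∈ ℝ and u ≥ 0: P( |G_{y,2}^Re(s; σ) − G_{y,2}^Re(t; σ)| ≥ u ) ≤ 2 exp( −u² / (16 |s−t|²) ). -/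
open MeasureTheory ProbabilityTheory
open scoped Classical

noncomputable section AuxProof

open MeasureTheory ProbabilityTheory

section Generic


/-- |e^{iA} - e^{iB}| ≤ |A - B| -/
lemma abs_exp_I_sub_exp_I (A B : ℝ) :
    ‖Complex.exp (A * Complex.I) - Complex.exp (B * Complex.I)‖ ≤ |A - B| := by
  have h1 : ‖Complex.exp ((A:ℂ) * Complex.I) - Complex.exp ((B:ℂ) * Complex.I)‖ ^ 2
      ≤ |A - B| ^ 2 := by
    rw [← Complex.normSq_eq_norm_sq, Complex.normSq_apply]
    simp only [Complex.exp_ofReal_mul_I_re, Complex.exp_ofReal_mul_I_im, Complex.sub_re,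
      Complex.sub_im]
    have hc := Real.one_sub_sq_div_two_le_cos (x := A - B)
    have h2 : Real.cos (A - B) = Real.cos A * Real.cos B + Real.sin A * Real.sin B :=
      Real.cos_sub A B
    have hA := Real.sin_sq_add_cos_sq A
    have hB := Real.sin_sq_add_cos_sq B
    have : |A - B| ^ 2 = (A - B) ^ 2 := sq_abs _
    nlinarith
  exact (pow_le_pow_iff_left₀ (norm_nonneg _) (abs_nonneg _) two_ne_zero).mp h1

variable {Ω : Type*} [MeasurableSpace Ω]

/-- Hoeffding-type bound on the mgf of a centered bounded random variable. -/
lemma mgf_le_of_bounded (μ : Measure Ω) [IsProbabilityMeasure μ]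
    {X : Ω → ℝ} (hX : Measurable X) {b : ℝ} (hb : 0 < b) (hbd : ∀ ω, |X ω| ≤ b)
    (hmean : ∫ ω, X ω ∂μ = 0) (l : ℝ) :
    mgf X μ l ≤ Real.exp (l ^ 2 * b ^ 2 / 2) := by
  have hpt : ∀ ω, Real.exp (l * X ω) ≤
      Real.cosh (l * b) + (X ω / b) * Real.sinh (l * b) := by
    intro ω
    have hx := hbd ω
    have hx1 : -b ≤ X ω := neg_le_of_abs_le hx
    have hx2 : X ω ≤ b := le_of_abs_le hx
    set θ : ℝ := (b + X ω) / (2 * b) with hθ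
    have hθ0 : 0 ≤ θ := div_nonneg (by linarith) (by positivity)
    have hθ1 : θ ≤ 1 := by
      rw [hθ, div_le_one (by positivity)]; linarith
    have key := (convexOn_exp).2 (Set.mem_univ (l * b)) (Set.mem_univ (-(l * b)))
      (show (0:ℝ) ≤ θ from hθ0) (show (0:ℝ) ≤ 1 - θ by linarith)
      (show θ + (1 - θ) = 1 by ring)
    have harg : θ • (l * b) + (1 - θ) • (-(l * b)) = l * X ω := by
      simp only [smul_eq_mul, hθ]
      field_simp
      ring
    rw [harg] at key
    have hrhs : θ • Real.exp (l * b) + (1 - θ) • Real.exp (-(l * b)) =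
        Real.cosh (l * b) + (X ω / b) * Real.sinh (l * b) := by
      simp only [smul_eq_mul, Real.cosh_eq, Real.sinh_eq, hθ]
      field_simp
      ring
    linarith [key, hrhs.symm.le]
  -- integrability
  have hXint : Integrable X μ := by
    refine Integrable.mono' (integrable_const b) hX.aestronglyMeasurable ?_
    exact Filter.Eventually.of_forall fun ω => (hbd ω)
  have hint : Integrable (fun ω => Real.exp (l * X ω)) μ := by
    refine Integrable.mono' (integrable_const (Real.exp (|l| * b))) ?_ ?_
    · exact ((hX.const_mul l).exp).aestronglyMeasurable
    · refine Filter.Eventually.of_forall fun ω => ?_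
      rw [Real.norm_eq_abs, abs_of_pos (Real.exp_pos _), Real.exp_le_exp]
      calc l * X ω ≤ |l * X ω| := le_abs_self _
        _ = |l| * |X ω| := abs_mul _ _
        _ ≤ |l| * b := by
            exact mul_le_mul_of_nonneg_left (hbd ω) (abs_nonneg l)
  have hcosh : mgf X μ l ≤ Real.cosh (l * b) := by
    have := integral_mono hint
      ((integrable_const (Real.cosh (l * b))).add ((hXint.div_const b).mul_const
        (Real.sinh (l * b)))) hpt
    rw [mgf]
    calc ∫ ω, Real.exp (l * X ω) ∂μ
        ≤ ∫ ω, (Real.cosh (l * b) + X ω / b * Real.sinh (l * b)) ∂μ := this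
      _ = Real.cosh (l * b) := by
          rw [integral_add (integrable_const _) ((hXint.div_const b).mul_const _),
            integral_const, integral_mul_const, integral_div, hmean]
          simp
  calc mgf X μ l ≤ Real.cosh (l * b) := hcosh
    _ ≤ Real.exp ((l * b) ^ 2 / 2) := Real.cosh_le_exp_half_sq _
    _ = Real.exp (l ^ 2 * b ^ 2 / 2) := by ring_nf

/-- Two-sided Chernoff bound for a subgaussian bounded random variable. -/
lemma chernoff_two_sided (μ : Measure Ω) [IsProbabilityMeasure μ]
    {Y : Ω → ℝ} (hY : Measurable Y) {B : ℝ} (hbd : ∀ ω, |Y ω| ≤ B)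
    {V : ℝ} (hV : 0 < V) (hmgf : ∀ l : ℝ, mgf Y μ l ≤ Real.exp (l ^ 2 * V / 2))
    {u : ℝ} (hu : 0 ≤ u) :
    μ {ω | u ≤ |Y ω|} ≤ ENNReal.ofReal (2 * Real.exp (-u ^ 2 / (2 * V))) := by
  have hone : ∀ (Z : Ω → ℝ), Measurable Z → (∀ ω, |Z ω| ≤ B) →
      (∀ l : ℝ, mgf Z μ l ≤ Real.exp (l ^ 2 * V / 2)) →
      μ {ω | u ≤ Z ω} ≤ ENNReal.ofReal (Real.exp (-u ^ 2 / (2 * V))) := by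
    intro Z hZ hZbd hZmgf
    set l : ℝ := u / V with hl
    have hl0 : 0 ≤ l := by positivity
    have hint : Integrable (fun ω => Real.exp (l * Z ω)) μ := by
      refine Integrable.mono' (integrable_const (Real.exp (|l| * |B| + 1))) ?_ ?_
      · exact ((hZ.const_mul l).exp).aestronglyMeasurable
      · refine Filter.Eventually.of_forall fun ω => ?_
        rw [Real.norm_eq_abs, abs_of_pos (Real.exp_pos _), Real.exp_le_exp]
        calc l * Z ω ≤ |l * Z ω| := le_abs_self _
          _ = |l| * |Z ω| := abs_mul _ _
          _ ≤ |l| * |B| := mul_le_mul_of_nonneg_left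
              ((hZbd ω).trans (le_abs_self _)) (abs_nonneg l)
          _ ≤ |l| * |B| + 1 := by linarith
    have h1 := measure_ge_le_exp_mul_mgf (μ := μ) (X := Z) u hl0 hint
    have h2 : Real.exp (-l * u) * mgf Z μ l ≤ Real.exp (-u ^ 2 / (2 * V)) := by
      calc Real.exp (-l * u) * mgf Z μ l
          ≤ Real.exp (-l * u) * Real.exp (l ^ 2 * V / 2) :=
            mul_le_mul_of_nonneg_left (hZmgf l) (Real.exp_pos _).le
        _ = Real.exp (-l * u + l ^ 2 * V / 2) := (Real.exp_add _ _).symm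
        _ = Real.exp (-u ^ 2 / (2 * V)) := by
            congr 1
            rw [hl]
            field_simp
            ring
    have hne : μ {ω | u ≤ Z ω} ≠ ⊤ := measure_ne_top _ _
    rw [← ENNReal.ofReal_toReal hne]
    exact ENNReal.ofReal_le_ofReal (h1.trans h2)
  have hsub : {ω | u ≤ |Y ω|} ⊆ {ω | u ≤ Y ω} ∪ {ω | u ≤ -Y ω} := by
    intro ω hω
    simp only [Set.mem_setOf_eq] at hω ⊢
    rcases le_abs.mp hω with h | h
    · exact Or.inl h
    · exact Or.inr h
  calc μ {ω | u ≤ |Y ω|} ≤ μ ({ω | u ≤ Y ω} ∪ {ω | u ≤ -Y ω}) := measure_mono hsub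
    _ ≤ μ {ω | u ≤ Y ω} + μ {ω | u ≤ -Y ω} := measure_union_le _ _
    _ ≤ ENNReal.ofReal (Real.exp (-u ^ 2 / (2 * V))) +
        ENNReal.ofReal (Real.exp (-u ^ 2 / (2 * V))) := by
        refine add_le_add (hone Y hY hbd hmgf) (hone (fun ω => -Y ω) hY.neg
          (fun ω => by rw [abs_neg]; exact hbd ω) (fun l => ?_))
        have : mgf (fun ω => -Y ω) μ l = mgf Y μ (-l) := mgf_neg
        rw [this]
        calc mgf Y μ (-l) ≤ Real.exp ((-l) ^ 2 * V / 2) := hmgf (-l)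
          _ = Real.exp (l ^ 2 * V / 2) := by ring_nf
    _ = ENNReal.ofReal (2 * Real.exp (-u ^ 2 / (2 * V))) := by
        rw [← ENNReal.ofReal_add (Real.exp_pos _).le (Real.exp_pos _).le]
        ring_nf


/-- `log t ≤ t / e`. -/
lemma log_le_div_e {t : ℝ} (ht : 0 < t) : Real.log t ≤ t / Real.exp 1 := by
  have h := Real.log_le_sub_one_of_pos (x := t / Real.exp 1) (by positivity)
  rw [Real.log_div (ne_of_gt ht) (ne_of_gt (Real.exp_pos 1)), Real.log_exp] at h
  linarith

/-- `(log n)² ≤ 2.1656 √n` for `n ≥ 1`. -/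
lemma log_sq_le_sqrt {n : ℕ} (hn : 1 ≤ n) :
    (Real.log n) ^ 2 ≤ 2.1656 * Real.sqrt n := by
  have hx0 : (0:ℝ) < n := by exact_mod_cast Nat.lt_of_lt_of_le Nat.zero_lt_one hn
  have hx1 : (1:ℝ) ≤ n := by exact_mod_cast hn
  set t : ℝ := (n:ℝ) ^ ((1:ℝ)/4) with htdef
  have ht1 : (1:ℝ) ≤ t := Real.one_le_rpow hx1 (by norm_num)
  have ht0 : 0 < t := lt_of_lt_of_le one_pos ht1
  have hlog : Real.log n = 4 * Real.log t := by
    rw [htdef, Real.log_rpow hx0]; ring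
  have hlt : Real.log t ≤ t / Real.exp 1 := log_le_div_e ht0
  have hlt0 : 0 ≤ Real.log t := Real.log_nonneg ht1
  have hsq : (Real.log t) ^ 2 ≤ (t / Real.exp 1) ^ 2 := by
    exact pow_le_pow_left₀ hlt0 hlt 2
  have ht2 : t ^ 2 = Real.sqrt n := by
    rw [htdef, ← Real.rpow_natCast ((n:ℝ) ^ ((1:ℝ)/4)) 2, ← Real.rpow_mul hx0.le,
      Real.sqrt_eq_rpow]
    norm_num
  have he : Real.exp 1 ^ 2 ≥ 7.389056 := by
    nlinarith [Real.exp_one_gt_d9]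
  have he0 : (0:ℝ) < Real.exp 1 ^ 2 := by positivity
  have h16 : 16 / Real.exp 1 ^ 2 ≤ 2.1656 := by
    rw [div_le_iff₀ he0]; nlinarith
  have hsqrtpos : (0:ℝ) ≤ Real.sqrt n := Real.sqrt_nonneg _
  calc (Real.log n) ^ 2 = 16 * (Real.log t) ^ 2 := by rw [hlog]; ring
    _ ≤ 16 * ((t / Real.exp 1) ^ 2) := by linarith
    _ = (16 / Real.exp 1 ^ 2) * t ^ 2 := by rw [div_pow]; ring
    _ = (16 / Real.exp 1 ^ 2) * Real.sqrt n := by rw [ht2]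
    _ ≤ 2.1656 * Real.sqrt n := by
        apply mul_le_mul_of_nonneg_right h16 hsqrtpos

/-- `√n / n² ≤ 2 (1/√(n-1) - 1/√n)` for `n ≥ 2`. -/
lemma sqrt_div_sq_le_telescope {n : ℕ} (hn : 2 ≤ n) :
    Real.sqrt n / (n:ℝ) ^ 2 ≤ 2 * ((Real.sqrt ((n:ℝ) - 1))⁻¹ - (Real.sqrt n)⁻¹) := by
  have hn1 : (1:ℝ) ≤ (n:ℝ) - 1 := by
    have : (2:ℝ) ≤ n := by exact_mod_cast hn
    linarith
  have hnn : (0:ℝ) < n := by positivity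
  set a : ℝ := Real.sqrt ((n:ℝ) - 1) with ha
  set b : ℝ := Real.sqrt n with hb
  have ha2 : a ^ 2 = (n:ℝ) - 1 := Real.sq_sqrt (by linarith)
  have hb2 : b ^ 2 = (n:ℝ) := Real.sq_sqrt hnn.le
  have ha0 : (1:ℝ) ≤ a :=
    calc (1:ℝ) = Real.sqrt 1 := by simp
      _ ≤ a := Real.sqrt_le_sqrt hn1
  have ha0' : 0 < a := lt_of_lt_of_le one_pos ha0
  have hb0 : 0 < b := Real.sqrt_pos.mpr hnn
  have hab : a ≤ b := Real.sqrt_le_sqrt (by linarith)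
  have hdiff : (b - a) * (b + a) = 1 := by nlinarith
  have hsum0 : 0 < a + b := by linarith
  have hrhs : (a⁻¹ - b⁻¹) = 1 / (a * b * (a + b)) := by
    rw [eq_div_iff (by positivity : (0:ℝ) < a * b * (a + b)).ne']
    field_simp
    linear_combination hdiff
  have hlhs : Real.sqrt n / (n:ℝ) ^ 2 = 1 / b ^ 3 := by
    rw [show ((n:ℝ) ^ 2) = b ^ 4 by rw [← hb2]; ring, ← hb]
    rw [div_eq_div_iff (by positivity) (by positivity)]
    ring
  rw [hlhs, hrhs, mul_one_div]
  rw [div_le_div_iff₀ (by positivity) (by positivity)]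
  nlinarith [mul_pos ha0' hb0, mul_pos (mul_pos ha0' hb0) hb0]

/-- Telescoping bound. -/
lemma sum_telescope_le (m : ℕ) :
    ∑ n ∈ Finset.Icc 14 m, ((Real.sqrt ((n:ℝ) - 1))⁻¹ - (Real.sqrt n)⁻¹)
      ≤ (Real.sqrt 13)⁻¹ := by
  rcases le_or_gt m 13 with h | h
  · rw [Finset.Icc_eq_empty (by omega)]
    simp [inv_nonneg, Real.sqrt_nonneg]
  · have key : ∀ k : ℕ, 13 ≤ k →
        ∑ n ∈ Finset.Icc 14 k, ((Real.sqrt ((n:ℝ) - 1))⁻¹ - (Real.sqrt n)⁻¹)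
          ≤ (Real.sqrt 13)⁻¹ - (Real.sqrt k)⁻¹ := by
      intro k hk
      induction k, hk using Nat.le_induction with
      | base =>
          rw [Finset.Icc_eq_empty (by omega)]
          norm_num
      | succ n hn ih =>
          rw [Finset.sum_Icc_succ_top (by omega : 14 ≤ n + 1)]
          push_cast
          push_cast at ih
          rw [show ((n:ℝ) + 1 - 1) = (n:ℝ) by ring]
          linarith [ih]
    have := key m (by omega)
    have h2 : 0 ≤ (Real.sqrt m)⁻¹ := by positivity
    linarith

/-- The key prime sum bound. -/
lemma sum_primes_log_sq_le (m : ℕ) :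
    ∑ p ∈ (Finset.Icc 1 m).filter Nat.Prime, (Real.log p) ^ 2 / (p:ℝ) ^ 2 ≤ 2 := by
  classical
  set s := (Finset.Icc 1 m).filter Nat.Prime with hs
  have hnonneg : ∀ p : ℕ, 0 ≤ (Real.log p) ^ 2 / (p:ℝ) ^ 2 := by
    intro p; positivity
  rw [← Finset.sum_filter_add_sum_filter_not s (fun p => p ≤ 13)]
  have hhead : ∑ p ∈ s.filter (fun p => p ≤ 13), (Real.log p) ^ 2 / (p:ℝ) ^ 2 ≤ 0.704 := by
    have hsub : s.filter (fun p => p ≤ 13) ⊆ ({2, 3, 5, 7, 11, 13} : Finset ℕ) := by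
      intro p hp
      simp only [hs, Finset.mem_filter, Finset.mem_Icc] at hp
      obtain ⟨⟨⟨_, _⟩, hprime⟩, hle⟩ := hp
      have h2 := hprime.two_le
      interval_cases p <;> revert hprime <;> decide
    calc ∑ p ∈ s.filter (fun p => p ≤ 13), (Real.log p) ^ 2 / (p:ℝ) ^ 2
        ≤ ∑ p ∈ ({2, 3, 5, 7, 11, 13} : Finset ℕ), (Real.log p) ^ 2 / (p:ℝ) ^ 2 :=
          Finset.sum_le_sum_of_subset_of_nonneg hsub (fun p _ _ => hnonneg p)
      _ ≤ 0.704 := by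
          have c2 : Real.log 2 ≤ 0.6931471808 := Real.log_two_lt_d9.le
          have c0 : (0:ℝ) ≤ Real.log 2 := Real.log_nonneg one_le_two
          have l3 : Real.log 3 ≤ 2 * Real.log 2 := by
            calc Real.log 3 ≤ Real.log 4 := Real.log_le_log (by norm_num) (by norm_num)
              _ = 2 * Real.log 2 := by
                  rw [show (4:ℝ) = 2 ^ 2 by norm_num, Real.log_pow]; push_cast; ring
          have l5 : Real.log 5 ≤ 3 * Real.log 2 := by
            calc Real.log 5 ≤ Real.log 8 := Real.log_le_log (by norm_num) (by norm_num)
              _ = 3 * Real.log 2 := by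
                  rw [show (8:ℝ) = 2 ^ 3 by norm_num, Real.log_pow]; push_cast; ring
          have l7 : Real.log 7 ≤ 3 * Real.log 2 := by
            calc Real.log 7 ≤ Real.log 8 := Real.log_le_log (by norm_num) (by norm_num)
              _ = 3 * Real.log 2 := by
                  rw [show (8:ℝ) = 2 ^ 3 by norm_num, Real.log_pow]; push_cast; ring
          have l11 : Real.log 11 ≤ 4 * Real.log 2 := by
            calc Real.log 11 ≤ Real.log 16 := Real.log_le_log (by norm_num) (by norm_num)
              _ = 4 * Real.log 2 := by
                  rw [show (16:ℝ) = 2 ^ 4 by norm_num, Real.log_pow]; push_cast; ring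
          have l13 : Real.log 13 ≤ 4 * Real.log 2 := by
            calc Real.log 13 ≤ Real.log 16 := Real.log_le_log (by norm_num) (by norm_num)
              _ = 4 * Real.log 2 := by
                  rw [show (16:ℝ) = 2 ^ 4 by norm_num, Real.log_pow]; push_cast; ring
          have n3 : (0:ℝ) ≤ Real.log 3 := Real.log_nonneg (by norm_num)
          have n5 : (0:ℝ) ≤ Real.log 5 := Real.log_nonneg (by norm_num)
          have n7 : (0:ℝ) ≤ Real.log 7 := Real.log_nonneg (by norm_num)
          have n11 : (0:ℝ) ≤ Real.log 11 := Real.log_nonneg (by norm_num)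
          have n13 : (0:ℝ) ≤ Real.log 13 := Real.log_nonneg (by norm_num)
          norm_num [Finset.sum_insert, Finset.mem_insert, Finset.mem_singleton]
          nlinarith [sq_nonneg (Real.log 2), sq_nonneg (Real.log 3), sq_nonneg (Real.log 5),
            sq_nonneg (Real.log 7), sq_nonneg (Real.log 11), sq_nonneg (Real.log 13)]
  have htail : ∑ p ∈ s.filter (fun p => ¬ p ≤ 13), (Real.log p) ^ 2 / (p:ℝ) ^ 2 ≤ 1.296 := by
    have hsub : s.filter (fun p => ¬ p ≤ 13) ⊆ Finset.Icc 14 m := by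
      intro p hp
      simp only [hs, Finset.mem_filter, Finset.mem_Icc] at hp ⊢
      omega
    calc ∑ p ∈ s.filter (fun p => ¬ p ≤ 13), (Real.log p) ^ 2 / (p:ℝ) ^ 2
        ≤ ∑ n ∈ Finset.Icc 14 m, (Real.log n) ^ 2 / (n:ℝ) ^ 2 :=
          Finset.sum_le_sum_of_subset_of_nonneg hsub (fun p _ _ => hnonneg p)
      _ ≤ ∑ n ∈ Finset.Icc 14 m,
            (2.1656 * 2) * ((Real.sqrt ((n:ℝ) - 1))⁻¹ - (Real.sqrt n)⁻¹) := by
          refine Finset.sum_le_sum (fun n hn => ?_)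
          simp only [Finset.mem_Icc] at hn
          have h14 : 14 ≤ n := hn.1
          have hlog := log_sq_le_sqrt (n := n) (by omega)
          have hpos : (0:ℝ) < (n:ℝ) ^ 2 := by
            have : (0:ℝ) < n := by exact_mod_cast Nat.lt_of_lt_of_le (by norm_num) h14
            positivity
          have htel := sqrt_div_sq_le_telescope (n := n) (by omega)
          calc (Real.log n) ^ 2 / (n:ℝ) ^ 2 ≤ 2.1656 * Real.sqrt n / (n:ℝ) ^ 2 := by
                gcongr
            _ = 2.1656 * (Real.sqrt n / (n:ℝ) ^ 2) := by ring
            _ ≤ 2.1656 * (2 * ((Real.sqrt ((n:ℝ) - 1))⁻¹ - (Real.sqrt n)⁻¹)) := by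
                apply mul_le_mul_of_nonneg_left htel (by norm_num)
            _ = (2.1656 * 2) * ((Real.sqrt ((n:ℝ) - 1))⁻¹ - (Real.sqrt n)⁻¹) := by ring
      _ = (2.1656 * 2) * ∑ n ∈ Finset.Icc 14 m,
            ((Real.sqrt ((n:ℝ) - 1))⁻¹ - (Real.sqrt n)⁻¹) := by
          rw [Finset.mul_sum]
      _ ≤ (2.1656 * 2) * (Real.sqrt 13)⁻¹ := by
          apply mul_le_mul_of_nonneg_left (sum_telescope_le m) (by norm_num)
      _ ≤ (2.1656 * 2) * (3.605:ℝ)⁻¹ := by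
          have h13 : (3.605:ℝ) ≤ Real.sqrt 13 := by
            rw [show (3.605:ℝ) = Real.sqrt (3.605 ^ 2) from
              (Real.sqrt_sq (by norm_num)).symm]
            exact Real.sqrt_le_sqrt (by norm_num)
          exact mul_le_mul_of_nonneg_left
            (inv_anti₀ (by norm_num) h13) (by norm_num)
      _ ≤ 1.296 := by norm_num
  linarith

end Generic

/-- The second moment of the uniform measure on the circle vanishes. -/
lemma integral_sq_circleUniform : ∫ z : ℂ, z ^ 2 ∂circleUniform = 0 := by
  have hg : Measurable (fun θ : ℝ => Complex.exp (2 * Real.pi * θ * Complex.I)) := by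
    fun_prop
  have hc : (4 * (Real.pi:ℂ) * Complex.I : ℂ) ≠ 0 := by
    refine mul_ne_zero (mul_ne_zero (by norm_num) ?_) Complex.I_ne_zero
    exact_mod_cast Complex.ofReal_ne_zero.mpr Real.pi_ne_zero
  have h0 : ∫ z : ℂ, z ^ 2 ∂circleUniform
      = ∫ θ in Set.Ioc (0:ℝ) 1, (Complex.exp (2 * Real.pi * θ * Complex.I)) ^ 2 := by
    rw [circleUniform]
    exact integral_map hg.aemeasurable ((continuous_pow 2).aestronglyMeasurable)
  rw [h0]
  have h1 : ∀ θ : ℝ, (Complex.exp (2 * Real.pi * θ * Complex.I)) ^ 2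
      = Complex.exp ((4 * (Real.pi:ℂ) * Complex.I) * (θ:ℂ)) := by
    intro θ
    rw [← Complex.exp_nat_mul]
    congr 1
    push_cast
    ring
  simp_rw [h1]
  rw [← intervalIntegral.integral_of_le zero_le_one,
    integral_exp_mul_complex hc]
  have h2 : Complex.exp (4 * (Real.pi:ℂ) * Complex.I) = 1 := by
    have h3 := Complex.exp_int_mul_two_pi_mul_I 2
    rw [show ((2:ℤ) : ℂ) * (2 * (Real.pi:ℂ) * Complex.I)
        = 4 * (Real.pi:ℂ) * Complex.I by push_cast; ring] at h3
    exact h3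
  norm_num [h2]

/-- The complex increment coefficient. -/
def auxD (σ s t : ℝ) (p : ℕ) : ℂ :=
  ((p:ℂ) ^ (-((σ:ℂ) + s * Complex.I))) ^ 2 - ((p:ℂ) ^ (-((σ:ℂ) + t * Complex.I))) ^ 2

/-- The bound for the increment coefficient. -/
def auxb (s t : ℝ) (p : ℕ) : ℝ := 2 * |s - t| * Real.log p / p

lemma auxb_pos {s t : ℝ} (hst : s ≠ t) {p : ℕ} (hp : p.Prime) : 0 < auxb s t p := by
  have h1 : (1:ℝ) < p := by exact_mod_cast hp.one_lt
  have h2 : 0 < Real.log p := Real.log_pos h1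
  have h3 : 0 < |s - t| := abs_pos.mpr (sub_ne_zero.mpr hst)
  have h4 : (0:ℝ) < p := by linarith
  unfold auxb
  positivity

lemma auxD_abs_le {σ s t : ℝ} (hσ : 1/2 ≤ σ) {p : ℕ} (hp : p.Prime) :
    ‖auxD σ s t p‖ ≤ auxb s t p := by
  have hp1 : (1:ℝ) < p := by exact_mod_cast hp.one_lt
  have hp0 : (0:ℝ) < p := lt_trans one_pos hp1
  have hpc : (p:ℂ) ≠ 0 := Nat.cast_ne_zero.mpr hp.pos.ne'
  set L : ℝ := Real.log p with hL
  have hL0 : 0 ≤ L := Real.log_nonneg hp1.le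
  have hlogc : Complex.log (p:ℂ) = (L : ℂ) := by
    rw [hL, show ((p:ℕ):ℂ) = ((p:ℝ):ℂ) from by push_cast; rfl,
      Complex.ofReal_log hp0.le]
  have hsq : ∀ r : ℝ, ((p:ℂ) ^ (-((σ:ℂ) + r * Complex.I))) ^ 2
      = Complex.exp ((-(2*σ*L) : ℝ)) * Complex.exp (((-(2*r*L) : ℝ)) * Complex.I) := by
    intro r
    rw [Complex.cpow_def_of_ne_zero hpc, ← Complex.exp_nat_mul, ← Complex.exp_add, hlogc]
    congr 1
    push_cast
    ring
  have habs : ‖auxD σ s t p‖ = Real.exp (-(2*σ*L)) *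
      ‖Complex.exp (((-(2*s*L):ℝ)) * Complex.I)
        - Complex.exp (((-(2*t*L):ℝ)) * Complex.I)‖ := by
    rw [auxD, hsq s, hsq t, ← mul_sub, norm_mul, Complex.norm_exp]
    norm_num
  have hexple : Real.exp (-(2*σ*L)) ≤ (p:ℝ)⁻¹ := by
    have : -(2*σ*L) ≤ -L := by nlinarith
    calc Real.exp (-(2*σ*L)) ≤ Real.exp (-L) := Real.exp_le_exp.mpr this
      _ = (p:ℝ)⁻¹ := by rw [Real.exp_neg, hL, Real.exp_log hp0]
  have hdiffabs : ‖Complex.exp (((-(2*s*L):ℝ)) * Complex.I)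
        - Complex.exp (((-(2*t*L):ℝ)) * Complex.I)‖ ≤ 2 * L * |s - t| := by
    calc ‖_‖ ≤ |(-(2*s*L)) - (-(2*t*L))| := abs_exp_I_sub_exp_I _ _
      _ = 2 * L * |s - t| := by
          rw [show (-(2*s*L)) - (-(2*t*L)) = (2*L) * (t - s) by ring, abs_mul,
            abs_of_nonneg (by linarith : (0:ℝ) ≤ 2*L), abs_sub_comm]
  calc ‖auxD σ s t p‖
      = Real.exp (-(2*σ*L)) * ‖_‖ := habs
    _ ≤ (p:ℝ)⁻¹ * (2 * L * |s - t|) := by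
        apply mul_le_mul hexple hdiffabs (norm_nonneg _) (by positivity)
    _ = auxb s t p := by rw [auxb, hL]; field_simp

lemma auxX_mean_zero {Ω : Type*} [MeasurableSpace Ω] {μ : Measure Ω} [IsProbabilityMeasure μ]
    {f : ℕ → Ω → ℂ} (hf : IsSteinhausFamily μ f) (σ s t : ℝ) {p : ℕ} (hp : p.Prime) :
    ∫ ω, ((f p ω) ^ 2 * auxD σ s t p).re ∂μ = 0 := by
  have hmeas : Measurable (fun ω => (f p ω) ^ 2 * auxD σ s t p) :=
    ((hf.meas p hp).pow_const 2).mul_const _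
  have hint : Integrable (fun ω => (f p ω) ^ 2 * auxD σ s t p) μ := by
    refine Integrable.mono' (integrable_const (‖auxD σ s t p‖))
      hmeas.aestronglyMeasurable ?_
    refine Filter.Eventually.of_forall fun ω => ?_
    rw [norm_mul, norm_pow, hf.unimodular ω p hp]
    simp
  have h1 := Complex.reCLM.integral_comp_comm hint
  simp only [Complex.reCLM_apply] at h1
  rw [h1, integral_mul_const]
  have h3 : ∫ ω, (f p ω) ^ 2 ∂μ = 0 := by
    have h4 : ∫ ω, (f p ω) ^ 2 ∂μ = ∫ z : ℂ, z ^ 2 ∂(Measure.map (f p) μ) :=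
      (integral_map (hf.meas p hp).aemeasurable ((continuous_pow 2).aestronglyMeasurable)).symm
    rw [h4, show Measure.map (f p) μ = circleUniform from hf.unif ⟨p, hp⟩,
      integral_sq_circleUniform]
  rw [h3, zero_mul, Complex.zero_re]

end AuxProof

/-- the subgaussian tail bound for increments of `G_{y,2}^Re`. -/
theorem G2_increment_tail_bound
    {Ω : Type*} [MeasurableSpace Ω] (μ : Measure Ω) [IsProbabilityMeasure μ]
    (f : ℕ → Ω → ℂ) (hf : IsSteinhausFamily μ f)
    (y σ s t u : ℝ) (hy : 3 ≤ y) (hσ : 1/2 ≤ σ) (hu : 0 ≤ u) :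
    μ {ω | u ≤ |G2Re f y σ s ω - G2Re f y σ t ω|} ≤
      ENNReal.ofReal (2 * Real.exp (-u ^ 2 / (16 * (s - t) ^ 2))) := by
  rcases eq_or_ne s t with rfl | hst
  · rcases eq_or_lt_of_le hu with rfl | hu'
    · refine le_trans prob_le_one ?_
      rw [show (-(0:ℝ) ^ 2 / (16 * (s - s) ^ 2)) = 0 by norm_num, Real.exp_zero, mul_one]
      exact ENNReal.one_le_ofReal.mpr one_le_two
    · have he : {ω | u ≤ |G2Re f y σ s ω - G2Re f y σ s ω|} = ∅ := by
        ext ω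
        simp only [Set.mem_setOf_eq, sub_self, abs_zero, Set.mem_empty_iff_false, iff_false,
          not_le]
        exact hu'
      rw [he]
      simp
  · have hΔ : 0 < |s - t| := abs_pos.mpr (sub_ne_zero.mpr hst)
    set T : Finset Nat.Primes := (Finset.Icc 1 ⌊y⌋₊).subtype Nat.Prime with hT
    set XX : Nat.Primes → Ω → ℝ :=
      fun q ω => ((f (q:ℕ) ω) ^ 2 * auxD σ s t (q:ℕ)).re with hXX
    have hXXmeas : ∀ q : Nat.Primes, Measurable (XX q) := by
      intro q
      simp only [hXX]
      exact Complex.measurable_re.comp (((hf.meas (q:ℕ) q.2).pow_const 2).mul_const _)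
    have hXXbd : ∀ q : Nat.Primes, ∀ ω, |XX q ω| ≤ auxb s t (q:ℕ) := by
      intro q ω
      simp only [hXX]
      calc |((f (q:ℕ) ω) ^ 2 * auxD σ s t (q:ℕ)).re|
          ≤ ‖(f (q:ℕ) ω) ^ 2 * auxD σ s t (q:ℕ)‖ := Complex.abs_re_le_norm _
        _ = ‖auxD σ s t (q:ℕ)‖ := by
            rw [norm_mul, norm_pow, hf.unimodular ω (q:ℕ) q.2, one_pow, one_mul]
        _ ≤ auxb s t (q:ℕ) := auxD_abs_le hσ q.2
    have hXXmean : ∀ q : Nat.Primes, ∫ ω, XX q ω ∂μ = 0 := by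
      intro q
      simp only [hXX]
      exact auxX_mean_zero hf σ s t q.2
    have hindep : iIndepFun XX μ := by
      simp only [hXX]
      exact hf.indep.comp (fun q => fun z : ℂ => (z ^ 2 * auxD σ s t (q:ℕ)).re)
        (fun q => Complex.measurable_re.comp ((measurable_id.pow_const 2).mul_const _))
    have hYfun : ∀ ω, G2Re f y σ s ω - G2Re f y σ t ω = ∑ q ∈ T, XX q ω := by
      intro ω
      have e1 : ∑ q ∈ T, XX q ω
          = ∑ p ∈ (Finset.Icc 1 ⌊y⌋₊).filter Nat.Prime,
              ((f p ω) ^ 2 * auxD σ s t p).re := by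
        simp only [hXX, hT]
        exact Finset.sum_subtype_eq_sum_filter
          (fun p => ((f p ω) ^ 2 * auxD σ s t p).re)
      rw [e1, G2Re, G2Re, ← Complex.sub_re, ← Finset.sum_sub_distrib, Complex.re_sum]
      refine Finset.sum_congr rfl fun p hp => ?_
      congr 1
      rw [auxD]
      ring
    have hYsum : (fun ω => G2Re f y σ s ω - G2Re f y σ t ω) = ∑ q ∈ T, XX q := by
      funext ω
      rw [hYfun ω, Finset.sum_apply]
    have hVle : ∑ q ∈ T, (auxb s t (q:ℕ)) ^ 2 ≤ 8 * (s - t) ^ 2 := by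
      have e1 : ∑ q ∈ T, (auxb s t (q:ℕ)) ^ 2
          = ∑ p ∈ (Finset.Icc 1 ⌊y⌋₊).filter Nat.Prime, (auxb s t p) ^ 2 := by
        simp only [hT]
        exact Finset.sum_subtype_eq_sum_filter (fun p => (auxb s t p) ^ 2)
      have e2 : ∀ p ∈ (Finset.Icc 1 ⌊y⌋₊).filter Nat.Prime,
          (auxb s t p) ^ 2 = 4 * (s - t) ^ 2 * ((Real.log p) ^ 2 / (p:ℝ) ^ 2) := by
        intro p _
        rw [auxb, div_pow, mul_pow, mul_pow, sq_abs]
        ring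
      rw [e1, Finset.sum_congr rfl e2, ← Finset.mul_sum]
      have h2 := sum_primes_log_sq_le ⌊y⌋₊
      nlinarith [sq_nonneg (s - t)]
    have hmgf : ∀ l : ℝ, mgf (fun ω => G2Re f y σ s ω - G2Re f y σ t ω) μ l
        ≤ Real.exp (l ^ 2 * (8 * (s - t) ^ 2) / 2) := by
      intro l
      rw [hYsum, hindep.mgf_sum hXXmeas T]
      calc ∏ q ∈ T, mgf (XX q) μ l
          ≤ ∏ q ∈ T, Real.exp (l ^ 2 * (auxb s t (q:ℕ)) ^ 2 / 2) := by
            refine Finset.prod_le_prod (fun q _ => mgf_nonneg) (fun q _ => ?_)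
            exact mgf_le_of_bounded μ (hXXmeas q) (auxb_pos hst q.2) (hXXbd q)
              (hXXmean q) l
        _ = Real.exp (∑ q ∈ T, l ^ 2 * (auxb s t (q:ℕ)) ^ 2 / 2) := (Real.exp_sum _ _).symm
        _ ≤ Real.exp (l ^ 2 * (8 * (s - t) ^ 2) / 2) := by
            apply Real.exp_le_exp.mpr
            have e3 : ∑ q ∈ T, l ^ 2 * (auxb s t (q:ℕ)) ^ 2 / 2
                = l ^ 2 * (∑ q ∈ T, (auxb s t (q:ℕ)) ^ 2) / 2 := by
              rw [Finset.mul_sum, Finset.sum_div]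
            rw [e3]
            have hl2 : (0:ℝ) ≤ l ^ 2 := sq_nonneg l
            nlinarith [hVle]
    have hbd : ∀ ω, |G2Re f y σ s ω - G2Re f y σ t ω| ≤ ∑ q ∈ T, auxb s t (q:ℕ) := by
      intro ω
      rw [hYfun ω]
      calc |∑ q ∈ T, XX q ω| ≤ ∑ q ∈ T, |XX q ω| := Finset.abs_sum_le_sum_abs _ _
        _ ≤ ∑ q ∈ T, auxb s t (q:ℕ) := Finset.sum_le_sum fun q _ => hXXbd q ω
    have hYmeas : Measurable (fun ω => G2Re f y σ s ω - G2Re f y σ t ω) := by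
      have heq : (fun ω => G2Re f y σ s ω - G2Re f y σ t ω)
          = fun ω => ∑ q ∈ T, XX q ω := funext hYfun
      rw [heq]
      exact Finset.measurable_sum T (fun q _ => hXXmeas q)
    have hfinal := chernoff_two_sided μ hYmeas hbd
      (by have h := pow_pos hΔ 2; rw [sq_abs] at h; linarith :
        (0:ℝ) < 8 * (s - t) ^ 2) hmgf hu
    calc μ {ω | u ≤ |G2Re f y σ s ω - G2Re f y σ t ω|}
        ≤ ENNReal.ofReal (2 * Real.exp (-u ^ 2 / (2 * (8 * (s - t) ^ 2)))) := hfinal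
      _ = ENNReal.ofReal (2 * Real.exp (-u ^ 2 / (16 * (s - t) ^ 2))) := by
          rw [show (2 * (8 * (s - t) ^ 2)) = 16 * (s - t) ^ 2 by ring]
end

section
/- For all λ ∈ ℝ, y ≥ 3, σ ≥ 1/2 and t ∈ ℝ: E[ exp(λ · G_{y,2}^Re(t; σ)) ] ≤ e^{λ²/4}. -/
open MeasureTheory ProbabilityTheory
open scoped Classical

section AuxLemmas

open Real MeasureTheory ProbabilityTheory

private lemma exp_le_cosh_add' {b u : ℝ} (hb : 0 < b) (hu : |u| ≤ b) :
    Real.exp u ≤ Real.cosh b + u * (Real.sinh b / b) := by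
  rw [abs_le] at hu
  have hw1 : (0:ℝ) ≤ (b - u) / (2 * b) := by
    apply div_nonneg <;> linarith
  have hw2 : (0:ℝ) ≤ (b + u) / (2 * b) := by
    apply div_nonneg <;> linarith
  have hws : (b - u) / (2 * b) + (b + u) / (2 * b) = 1 := by field_simp; ring
  have := convexOn_exp.2 (Set.mem_univ (-b)) (Set.mem_univ b) hw1 hw2 hws
  simp only [smul_eq_mul] at this
  have harg : (b - u) / (2 * b) * (-b) + (b + u) / (2 * b) * b = u := by field_simp; ring
  rw [harg] at this
  refine this.trans (le_of_eq ?_)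
  rw [Real.cosh_eq, Real.sinh_eq]
  field_simp
  ring

private lemma prime_inv_sq_sum_le' (P : Finset ℕ) (hP : ∀ p ∈ P, p.Prime) :
    ∑ p ∈ P, (1:ℝ)/(p:ℝ)^2 ≤ 1/2 := by
  classical
  have hnn : ∀ p : ℕ, (0:ℝ) ≤ 1/(p:ℝ)^2 := fun p => by positivity
  rw [← Finset.sum_filter_add_sum_filter_not P (fun p => p < 11)]
  have hsmall : ∑ p ∈ P.filter (fun p => p < 11), (1:ℝ)/(p:ℝ)^2
      ≤ 1/4 + 1/9 + 1/25 + 1/49 := by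
    have hsub : P.filter (fun p => p < 11) ⊆ ({2,3,5,7} : Finset ℕ) := by
      intro p hp
      rw [Finset.mem_filter] at hp
      obtain ⟨hp1, hlt⟩ := hp
      have hpp := hP p hp1
      interval_cases p <;> revert hpp <;> decide
    calc ∑ p ∈ P.filter (fun p => p < 11), (1:ℝ)/(p:ℝ)^2
        ≤ ∑ p ∈ ({2,3,5,7} : Finset ℕ), (1:ℝ)/(p:ℝ)^2 :=
          Finset.sum_le_sum_of_subset_of_nonneg hsub (fun p _ _ => hnn p)
      _ = 1/4 + 1/9 + 1/25 + 1/49 := by norm_num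
  have hbig : ∑ p ∈ P.filter (fun p => ¬ p < 11), (1:ℝ)/(p:ℝ)^2 ≤ 1/14 := by
    set Q := P.filter (fun p => ¬ p < 11) with hQ
    have hQmem : ∀ p ∈ Q, p.Prime ∧ 11 ≤ p := by
      intro p hp
      rw [hQ, Finset.mem_filter] at hp
      exact ⟨hP p hp.1, by omega⟩
    have hpt : ∀ p ∈ Q, (1:ℝ)/(p:ℝ)^2 ≤ (1/((p:ℝ)-2) - 1/(p:ℝ))/2 := by
      intro p hp
      have h11 : (11:ℝ) ≤ (p:ℝ) := by exact_mod_cast (hQmem p hp).2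
      have h2 : ((p:ℝ)-2) ≠ 0 := by linarith
      have h0 : (p:ℝ) ≠ 0 := by linarith
      have heq : (1/((p:ℝ)-2) - 1/(p:ℝ))/2 = 1/(((p:ℝ)-2)*(p:ℝ)) := by
        field_simp
        ring
      rw [heq]
      apply one_div_le_one_div_of_le (by nlinarith) (by nlinarith)
    have hodd : ∀ p ∈ Q, p = 2 * ((p-9)/2) + 9 := by
      intro p hp
      obtain ⟨hpp, h11⟩ := hQmem p hp
      obtain ⟨m, hm⟩ := hpp.odd_of_ne_two (by omega)
      omega
    set t : ℕ → ℝ := fun k => 1/(2*(k:ℝ)+7) - 1/(2*(k:ℝ)+9) with ht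
    have hterm : ∀ p ∈ Q, ((1:ℝ)/((p:ℝ)-2) - 1/(p:ℝ)) = t ((p-9)/2) := by
      intro p hp
      have h := hodd p hp
      have hc : (p:ℝ) = 2*(((p-9)/2 : ℕ):ℝ) + 9 := by
        exact_mod_cast congrArg (Nat.cast : ℕ → ℝ) h
      rw [ht, hc]
      ring_nf
    have hinj : ∀ a ∈ Q, ∀ b ∈ Q, (a-9)/2 = (b-9)/2 → a = b := by
      intro a ha b hb h
      have := hodd a ha; have := hodd b hb
      omega
    have hnn2 : ∀ k : ℕ, (0:ℝ) ≤ t k := by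
      intro k
      have h1 : (0:ℝ) < 2*(k:ℝ)+7 := by positivity
      have := one_div_le_one_div_of_le h1 (by linarith : 2*(k:ℝ)+7 ≤ 2*(k:ℝ)+9)
      rw [ht]; dsimp only; linarith
    set K := Q.image (fun p => (p-9)/2) with hK
    have hsub2 : K ⊆ Finset.range (K.sup id + 1) := by
      intro k hk
      exact Finset.mem_range.mpr (Nat.lt_succ_of_le (Finset.le_sup (f := id) hk))
    have htel : ∑ k ∈ K, t k ≤ 1/7 := by
      calc ∑ k ∈ K, t k
          ≤ ∑ k ∈ Finset.range (K.sup id + 1), t k :=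
            Finset.sum_le_sum_of_subset_of_nonneg hsub2 (fun k _ _ => hnn2 k)
        _ = ∑ k ∈ Finset.range (K.sup id + 1),
              ((fun k : ℕ => (1:ℝ)/(2*(k:ℝ)+7)) k - (fun k : ℕ => (1:ℝ)/(2*(k:ℝ)+7)) (k+1)) := by
            apply Finset.sum_congr rfl
            intro k _
            rw [ht]
            push_cast
            ring_nf
        _ = (fun k : ℕ => (1:ℝ)/(2*(k:ℝ)+7)) 0 - (fun k : ℕ => (1:ℝ)/(2*(k:ℝ)+7)) (K.sup id + 1) :=
            Finset.sum_range_sub' _ _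
        _ ≤ 1/7 := by
            have : (0:ℝ) ≤ 1/(2*((K.sup id + 1 : ℕ):ℝ)+7) := by positivity
            simp only
            norm_num
            linarith
    calc ∑ p ∈ Q, (1:ℝ)/(p:ℝ)^2 ≤ ∑ p ∈ Q, (1/((p:ℝ)-2) - 1/(p:ℝ))/2 :=
        Finset.sum_le_sum hpt
      _ = (∑ p ∈ Q, ((1:ℝ)/((p:ℝ)-2) - 1/(p:ℝ)))/2 := by rw [Finset.sum_div]
      _ = (∑ p ∈ Q, t ((p-9)/2))/2 := by rw [Finset.sum_congr rfl hterm]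
      _ = (∑ k ∈ K, t k)/2 := by rw [hK, Finset.sum_image hinj]
      _ ≤ (1/7)/2 := by linarith
      _ ≤ 1/14 := by norm_num
  linarith

private lemma integral_Ioc_cos_four_pi' :
    ∫ θ in Set.Ioc (0:ℝ) 1, Real.cos (4*Real.pi*θ) = 0 := by
  rw [← intervalIntegral.integral_of_le zero_le_one]
  have h4 : (4*Real.pi) ≠ 0 := by positivity
  rw [intervalIntegral.integral_comp_mul_left Real.cos h4]
  rw [integral_cos]
  have h1 : (4*Real.pi) * 1 = ((4:ℕ):ℝ) * Real.pi := by push_cast; ring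
  rw [mul_zero, h1, Real.sin_nat_mul_pi, Real.sin_zero]
  simp

private lemma integral_Ioc_sin_four_pi' :
    ∫ θ in Set.Ioc (0:ℝ) 1, Real.sin (4*Real.pi*θ) = 0 := by
  rw [← intervalIntegral.integral_of_le zero_le_one]
  have h4 : (4*Real.pi) ≠ 0 := by positivity
  rw [intervalIntegral.integral_comp_mul_left Real.sin h4]
  rw [integral_sin]
  have h1 : (4*Real.pi) * 1 = ((2:ℕ):ℝ) * (2*Real.pi) := by push_cast; ring
  rw [mul_zero, h1, Real.cos_nat_mul_two_pi, Real.cos_zero]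
  simp

private lemma circle_exp_moment' {Ω : Type*} [MeasurableSpace Ω] (μ : Measure Ω)
    [IsProbabilityMeasure μ] (l : ℝ) (c : ℂ) (g : Ω → ℂ) (hg : Measurable g)
    (hunif : Measure.map g μ = circleUniform) :
    ∫ ω, Real.exp (l * ((g ω * c)^2).re) ∂μ
      ≤ Real.exp (l^2 * ‖c‖^4 / 2) := by
  have hFcont : Continuous (fun z : ℂ => Real.exp (l * ((z * c)^2).re)) := by
    fun_prop
  have hecont : Continuous (fun θ : ℝ => Complex.exp (2 * Real.pi * θ * Complex.I)) := by
    fun_prop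
  have h1 : ∫ ω, Real.exp (l * ((g ω * c)^2).re) ∂μ
      = ∫ θ in Set.Ioc (0:ℝ) 1,
          Real.exp (l * (((Complex.exp (2 * Real.pi * θ * Complex.I)) * c)^2).re) := by
    rw [← integral_map hg.aemeasurable (hFcont.aestronglyMeasurable), hunif, circleUniform,
      integral_map hecont.measurable.aemeasurable (hFcont.aestronglyMeasurable)]
  rw [h1]
  have habs : ∀ θ : ℝ, ‖Complex.exp (2 * Real.pi * θ * Complex.I)‖ = 1 := by
    intro θ
    rw [Complex.norm_exp]
    simp
  have hre : ∀ θ : ℝ, (((Complex.exp (2 * Real.pi * θ * Complex.I)) * c)^2).re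
      = Real.cos (4*Real.pi*θ) * (c^2).re - Real.sin (4*Real.pi*θ) * (c^2).im := by
    intro θ
    have hz : (Complex.exp (2 * Real.pi * θ * Complex.I))^2
        = Complex.exp ((4*Real.pi*θ : ℝ) * Complex.I) := by
      rw [← Complex.exp_nat_mul]
      congr 1
      push_cast
      ring
    rw [mul_pow, hz, Complex.mul_re, Complex.exp_ofReal_mul_I_re, Complex.exp_ofReal_mul_I_im]
  set b : ℝ := |l| * ‖c‖^2 with hb
  have hbnn : 0 ≤ b := by positivity
  rcases eq_or_lt_of_le hbnn with hb0 | hbpos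
  · have : ∀ θ : ℝ,
        Real.exp (l * (((Complex.exp (2 * Real.pi * θ * Complex.I)) * c)^2).re) = 1 := by
      intro θ
      rcases mul_eq_zero.mp hb0.symm with h | h
      · rw [abs_eq_zero.mp h]; simp
      · have : c = 0 := by
          have := pow_eq_zero_iff (n := 2) (by norm_num) |>.mp h
          exact norm_eq_zero.mp this
        rw [this]
        simp
    simp_rw [this]
    rw [setIntegral_const]
    simp [Real.volume_Ioc]
    positivity
  · set u : ℝ → ℝ :=
      fun θ => l * (((Complex.exp (2 * Real.pi * θ * Complex.I)) * c)^2).re with hu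
    have hucont : Continuous u := by fun_prop
    have hubd : ∀ θ, |u θ| ≤ b := by
      intro θ
      rw [hu]
      simp only
      rw [abs_mul, hb]
      gcongr
      calc |(((Complex.exp (2 * Real.pi * θ * Complex.I)) * c)^2).re|
          ≤ ‖((Complex.exp (2 * Real.pi * θ * Complex.I)) * c)^2‖ :=
            Complex.abs_re_le_norm _
        _ = ‖c‖^2 := by
            rw [norm_pow, norm_mul, habs, one_mul]
    have hint1 : IntegrableOn (fun θ => Real.exp (u θ)) (Set.Ioc (0:ℝ) 1) volume :=
      ((Real.continuous_exp.comp hucont).integrableOn_Icc).mono_set Set.Ioc_subset_Icc_self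
    have hintu : IntegrableOn u (Set.Ioc (0:ℝ) 1) volume :=
      (hucont.integrableOn_Icc).mono_set Set.Ioc_subset_Icc_self
    have hint2 : IntegrableOn (fun θ => Real.cosh b + u θ * (Real.sinh b / b))
        (Set.Ioc (0:ℝ) 1) volume :=
      (integrableOn_const (by simp [Real.volume_Ioc])).add
        (hintu.mul_const _)
    have hmono : ∫ θ in Set.Ioc (0:ℝ) 1, Real.exp (u θ)
        ≤ ∫ θ in Set.Ioc (0:ℝ) 1, (Real.cosh b + u θ * (Real.sinh b / b)) :=
      setIntegral_mono_on hint1 hint2 measurableSet_Ioc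
        (fun θ _ => exp_le_cosh_add' hbpos (hubd θ))
    have hiu : ∫ θ in Set.Ioc (0:ℝ) 1, u θ = 0 := by
      simp_rw [hu, hre]
      rw [integral_const_mul]
      rw [integral_sub ((by fun_prop :
            Continuous fun θ:ℝ => Real.cos (4*Real.pi*θ) * (c^2).re).integrableOn_Icc.mono_set
            Set.Ioc_subset_Icc_self)
        ((by fun_prop :
            Continuous fun θ:ℝ => Real.sin (4*Real.pi*θ) * (c^2).im).integrableOn_Icc.mono_set
            Set.Ioc_subset_Icc_self)]
      rw [integral_mul_const, integral_mul_const, integral_Ioc_cos_four_pi',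
        integral_Ioc_sin_four_pi']
      ring
    have hieq : ∫ θ in Set.Ioc (0:ℝ) 1, (Real.cosh b + u θ * (Real.sinh b / b))
        = Real.cosh b := by
      rw [integral_add (integrableOn_const (C := Real.cosh b) (μ := volume) (s := Set.Ioc (0:ℝ) 1)
          (by simp [Real.volume_Ioc]))
        (hintu.mul_const _), integral_mul_const, hiu, setIntegral_const]
      simp [Real.volume_Ioc]
    calc ∫ θ in Set.Ioc (0:ℝ) 1, Real.exp (u θ) ≤ Real.cosh b := by rw [← hieq]; exact hmono
      _ ≤ Real.exp (b^2/2) := Real.cosh_le_exp_half_sq b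
      _ = Real.exp (l^2 * ‖c‖^4 / 2) := by
          congr 1
          rw [hb]
          rw [mul_pow, sq_abs]
          ring

end AuxLemmas

/-- `E[exp(λ G_{y,2}^Re(t;σ))] ≤ e^{λ²/4}`. -/


theorem G2_pointwise_exp_moment
    {Ω : Type*} [MeasurableSpace Ω] (μ : Measure Ω) [IsProbabilityMeasure μ]
    (f : ℕ → Ω → ℂ) (hf : IsSteinhausFamily μ f)
    (l : ℝ) (y σ t : ℝ) (hy : 3 ≤ y) (hσ : 1/2 ≤ σ) :
    (∫ ω, Real.exp (l * G2Re f y σ t ω) ∂μ) ≤ Real.exp (l ^ 2 / 4) := by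
  classical
  set c : ℕ → ℂ := fun p => (p:ℂ) ^ (-((σ : ℂ) + t * Complex.I)) with hc
  set X : Nat.Primes → Ω → ℝ :=
    fun q => (fun z : ℂ => ((z * c (q:ℕ))^2).re) ∘ (f (q:ℕ)) with hX
  have hgmeas : ∀ q : Nat.Primes, Measurable (fun z : ℂ => ((z * c (q:ℕ))^2).re) :=
    fun q => Complex.measurable_re.comp ((measurable_id.mul_const _).pow_const 2)
  have hXmeas : ∀ q : Nat.Primes, Measurable (X q) :=
    fun q => (hgmeas q).comp (hf.meas (q:ℕ) q.2)
  have hindep : iIndepFun X μ :=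
    hf.indep.comp (fun q => fun z : ℂ => ((z * c (q:ℕ))^2).re) hgmeas
  set s : Finset Nat.Primes := (Finset.Icc 1 ⌊y⌋₊).subtype Nat.Prime with hs
  have hGsum : ∀ ω, G2Re f y σ t ω = ∑ q ∈ s, X q ω := by
    intro ω
    rw [G2Re, Complex.re_sum, hs]
    exact (Finset.sum_subtype_eq_sum_filter
      (fun p => ((f p ω * c p)^2).re) (s := Finset.Icc 1 ⌊y⌋₊)).symm
  have hmgf : (∫ ω, Real.exp (l * G2Re f y σ t ω) ∂μ) = mgf (∑ q ∈ s, X q) μ l := by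
    rw [mgf]
    refine integral_congr_ae (Filter.Eventually.of_forall fun ω => ?_)
    simp only [hGsum, Finset.sum_apply]
  rw [hmgf, hindep.mgf_sum hXmeas s]
  have hper : ∀ q ∈ s, mgf (X q) μ l ≤ Real.exp (l^2/2 * (1/((q:ℕ):ℝ)^2)) := by
    intro q _
    have h2q : (2:ℝ) ≤ ((q:ℕ):ℝ) := by exact_mod_cast q.2.two_le
    have hqpos : (0:ℝ) < ((q:ℕ):ℝ) := by linarith
    have habsc : ‖c (q:ℕ)‖ = ((q:ℕ):ℝ) ^ (-σ) := by
      have hceq : c (q:ℕ) = (((q:ℕ):ℝ):ℂ) ^ (-((σ : ℂ) + t * Complex.I)) := by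
        rw [hc]
        norm_num
      rw [hceq, Complex.norm_cpow_eq_rpow_re_of_pos hqpos]
      congr 1
      simp
    have hpow : ‖c (q:ℕ)‖^4 ≤ 1/((q:ℕ):ℝ)^2 := by
      rw [habsc]
      have h1 : ((q:ℕ):ℝ) ^ (-σ) ≤ ((q:ℕ):ℝ) ^ (-(1/2):ℝ) :=
        Real.rpow_le_rpow_of_exponent_le (by linarith) (by linarith)
      have h0 : (0:ℝ) ≤ ((q:ℕ):ℝ) ^ (-σ) := Real.rpow_nonneg hqpos.le _
      calc (((q:ℕ):ℝ) ^ (-σ))^4 ≤ (((q:ℕ):ℝ) ^ (-(1/2):ℝ))^4 := by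
            exact pow_le_pow_left₀ h0 h1 4
        _ = ((q:ℕ):ℝ) ^ ((-(1/2):ℝ) * (4:ℕ)) := by
            rw [← Real.rpow_natCast (((q:ℕ):ℝ) ^ (-(1/2):ℝ)) 4, ← Real.rpow_mul hqpos.le]
        _ = ((q:ℕ):ℝ) ^ (-(2:ℝ)) := by norm_num
        _ = 1/((q:ℕ):ℝ)^2 := by
            rw [Real.rpow_neg hqpos.le, one_div]
            congr 1
            rw [show ((2:ℝ)) = ((2:ℕ):ℝ) by norm_num, Real.rpow_natCast]
    have hmain : mgf (X q) μ l ≤ Real.exp (l^2 * ‖c (q:ℕ)‖^4 / 2) := by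
      have : mgf (X q) μ l = ∫ ω, Real.exp (l * ((f (q:ℕ) ω * c (q:ℕ))^2).re) ∂μ := rfl
      rw [this]
      exact circle_exp_moment' μ l (c (q:ℕ)) (f (q:ℕ)) (hf.meas (q:ℕ) q.2) (hf.unif q)
    refine hmain.trans ?_
    rw [Real.exp_le_exp]
    have hl2 : (0:ℝ) ≤ l^2 := sq_nonneg l
    calc l^2 * ‖c (q:ℕ)‖^4 / 2 ≤ l^2 * (1/((q:ℕ):ℝ)^2) / 2 := by
          gcongr
      _ = l^2/2 * (1/((q:ℕ):ℝ)^2) := by ring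
  calc ∏ q ∈ s, mgf (X q) μ l
      ≤ ∏ q ∈ s, Real.exp (l^2/2 * (1/((q:ℕ):ℝ)^2)) :=
        Finset.prod_le_prod (fun q _ => mgf_nonneg) hper
    _ = Real.exp (∑ q ∈ s, l^2/2 * (1/((q:ℕ):ℝ)^2)) := (Real.exp_sum _ _).symm
    _ ≤ Real.exp (l^2/4) := by
        rw [Real.exp_le_exp, ← Finset.mul_sum]
        have hsum2 : ∑ q ∈ s, (1:ℝ)/((q:ℕ):ℝ)^2
            = ∑ p ∈ (Finset.Icc 1 ⌊y⌋₊).filter (fun p => Nat.Prime p), (1:ℝ)/(p:ℝ)^2 := by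
          rw [hs]
          exact Finset.sum_subtype_eq_sum_filter (fun p => (1:ℝ)/(p:ℝ)^2) (s := Finset.Icc 1 ⌊y⌋₊)
        have hP := prime_inv_sq_sum_le'
          ((Finset.Icc 1 ⌊y⌋₊).filter (fun p => Nat.Prime p))
          (fun p hp => (Finset.mem_filter.mp hp).2)
        rw [hsum2]
        nlinarith [sq_nonneg l]
end
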